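/- arXiv:2510.16725 — 4 statements merged into one kernel-verified Lean document; each statement's English description precedes it below -/
import Mathlib

section
/- Let α, g : [0,∞) → [0,∞) be continuous functions such that α(s) > 0 for all s > 0, g(s) > 0 for all s ≥ 0, and ∫₀^s g(τ)dτ → +∞ as s → +∞. Then there exists a function β of class 𝒦𝓛 (depending only on α and g) such that for every T > 0, every y₀ ≥ 0, and every nonnegative absolutely continuous function y on [0,T] satisfying y(0) = y₀ and y′(t) ≤ −g(t)·α(y(t)) for almost every t ∈ [0,T], one has y(t) ≤ β(y₀, t) for all t ∈ [0,T]. -/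
open Set MeasureTheory Filter

noncomputable section

/-- A function of class 𝒦: continuous, strictly increasing on `[0,∞)`, vanishing at `0`,
and mapping `[0,∞)` into `[0,∞)`. -/
def ClassK (f : ℝ → ℝ) : Prop :=
  ContinuousOn f (Ici 0) ∧ StrictMonoOn f (Ici 0) ∧ f 0 = 0 ∧ ∀ s ∈ Ici (0:ℝ), 0 ≤ f s

/-- A function of class 𝒦∞: class 𝒦 and unbounded. -/
def ClassKInf (f : ℝ → ℝ) : Prop := ClassK f ∧ Tendsto f atTop atTop

/-- A function of class 𝒦𝓛. -/
def ClassKL (β : ℝ → ℝ → ℝ) : Prop :=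
  ContinuousOn (fun p : ℝ × ℝ => β p.1 p.2) (Ici 0 ×ˢ Ici 0) ∧
  (∀ t ∈ Ici (0:ℝ), ClassK (fun s => β s t)) ∧
  ∀ r > (0:ℝ), StrictAntiOn (fun t => β r t) (Ici 0) ∧
    Tendsto (fun t => β r t) atTop (nhds 0)

/-- `y` is absolutely continuous on `[0,T]` with (a.e.) derivative `y'`, i.e. `y` is the
indefinite integral of the integrable function `y'`. -/
def IsACDeriv (T : ℝ) (y y' : ℝ → ℝ) : Prop :=
  IntegrableOn y' (Icc 0 T) ∧ ∀ t ∈ Icc (0:ℝ) T, y t = y 0 + ∫ s in (0:ℝ)..t, y' s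

set_option linter.unusedVariables false
set_option linter.unusedSectionVars false

namespace KLAux

variable (α g : ℝ → ℝ)

/-- modified α: continuous on all of ℝ, `≤ α` on `[0,∞)`. -/
def At : ℝ → ℝ := fun s => min (α (max s 0)) (max s 0)

def gt' : ℝ → ℝ := fun t => g (max t 0)

def Gt : ℝ → ℝ := fun t => ∫ τ in (0:ℝ)..t, gt' g τ

def etaF (α : ℝ → ℝ) : ℝ → ℝ := fun r => ∫ τ in (1:ℝ)..r, (At α τ)⁻¹

def etaH (α : ℝ → ℝ) : ℝ → ℝ := fun x => etaF α (Real.exp x)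

variable {α g}

lemma At_cont (hαc : ContinuousOn α (Ici 0)) : Continuous (At α) := by
  have h1 : Continuous fun s : ℝ => max s 0 := continuous_id.max continuous_const
  have h2 : Continuous fun s : ℝ => α (max s 0) :=
    hαc.comp_continuous h1 (fun x => mem_Ici.mpr (le_max_right _ _))
  exact h2.min h1

lemma At_nonneg (hαnn : ∀ s ∈ Ici (0:ℝ), 0 ≤ α s) (s : ℝ) : 0 ≤ At α s :=
  le_min (hαnn _ (mem_Ici.mpr (le_max_right _ _))) (le_max_right _ _)

lemma At_pos (hαpos : ∀ s > (0:ℝ), 0 < α s) {s : ℝ} (hs : 0 < s) : 0 < At α s := by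
  have : max s 0 = s := max_eq_left hs.le
  simp only [At, this]
  exact lt_min (hαpos _ hs) hs

lemma At_le_self {s : ℝ} (hs : 0 ≤ s) : At α s ≤ s := by
  simp only [At, max_eq_left hs]; exact min_le_right _ _

lemma At_le_alpha {s : ℝ} (hs : 0 ≤ s) : At α s ≤ α s := by
  simp only [At, max_eq_left hs]; exact min_le_left _ _

lemma gt'_cont (hgc : ContinuousOn g (Ici 0)) : Continuous (gt' g) :=
  hgc.comp_continuous (continuous_id.max continuous_const) (fun x => mem_Ici.mpr (le_max_right _ _))

lemma gt'_pos (hgpos : ∀ s ∈ Ici (0:ℝ), 0 < g s) (t : ℝ) : 0 < gt' g t :=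
  hgpos _ (mem_Ici.mpr (le_max_right _ _))

lemma gt'_eq {t : ℝ} (ht : 0 ≤ t) : gt' g t = g t := by
  simp [gt', max_eq_left ht]

lemma Gt_cont (hgc : ContinuousOn g (Ici 0)) : Continuous (Gt g) :=
  intervalIntegral.continuous_primitive
    (fun a b => ((gt'_cont hgc).continuousOn).intervalIntegrable) 0

lemma Gt_sub (hgc : ContinuousOn g (Ici 0)) (a b : ℝ) :
    Gt g b - Gt g a = ∫ τ in a..b, gt' g τ :=
  intervalIntegral.integral_interval_sub_left
    ((gt'_cont hgc).continuousOn.intervalIntegrable)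
    ((gt'_cont hgc).continuousOn.intervalIntegrable)

lemma Gt_strictMono (hgc : ContinuousOn g (Ici 0)) (hgpos : ∀ s ∈ Ici (0:ℝ), 0 < g s) :
    StrictMono (Gt g) := by
  intro a b hab
  have h := Gt_sub (g := g) hgc a b
  have hpos : 0 < ∫ τ in a..b, gt' g τ :=
    intervalIntegral.intervalIntegral_pos_of_pos ((gt'_cont hgc).continuousOn.intervalIntegrable)
      (fun x => gt'_pos hgpos x) hab
  linarith

lemma Gt_zero : Gt g 0 = 0 := by simp [Gt]


lemma Gt_eq {s : ℝ} (hs : 0 ≤ s) : Gt g s = ∫ τ in (0:ℝ)..s, g τ := by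
  apply intervalIntegral.integral_congr
  intro τ hτ
  rw [uIcc_of_le hs] at hτ
  exact gt'_eq hτ.1

section EtaLemmas

variable (hαc : ContinuousOn α (Ici 0)) (hαpos : ∀ s > (0:ℝ), 0 < α s)
include hαc hαpos

lemma invAt_contOn : ContinuousOn (fun τ => (At α τ)⁻¹) (Ioi 0) := by
  apply ((At_cont hαc).continuousOn).inv₀
  intro x hx; exact (At_pos hαpos hx).ne'

lemma invAt_intble {a b : ℝ} (ha : 0 < a) (hb : 0 < b) :
    IntervalIntegrable (fun τ => (At α τ)⁻¹) volume a b := by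
  apply ContinuousOn.intervalIntegrable
  apply (invAt_contOn hαc hαpos).mono
  intro x hx
  rcases le_total a b with h | h
  · rw [uIcc_of_le h] at hx; exact lt_of_lt_of_le ha hx.1
  · rw [uIcc_of_ge h] at hx; exact lt_of_lt_of_le hb hx.1

lemma etaF_sub {a b : ℝ} (ha : 0 < a) (hb : 0 < b) :
    etaF α b - etaF α a = ∫ τ in a..b, (At α τ)⁻¹ :=
  intervalIntegral.integral_interval_sub_left (invAt_intble hαc hαpos one_pos hb)
    (invAt_intble hαc hαpos one_pos ha)

lemma etaF_strictMonoOn : StrictMonoOn (etaF α) (Ioi 0) := by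
  intro a ha b hb hab
  have h := etaF_sub hαc hαpos (α := α) ha hb
  have : 0 < ∫ τ in a..b, (At α τ)⁻¹ := by
    apply intervalIntegral.intervalIntegral_pos_of_pos_on (invAt_intble hαc hαpos ha hb)
    · intro x hx; exact inv_pos.mpr (At_pos hαpos (lt_trans ha hx.1))
    · exact hab
  linarith

lemma etaF_continuousAt {r : ℝ} (hr : 0 < r) : ContinuousAt (etaF α) r := by
  have h : HasDerivAt (etaF α) ((At α r)⁻¹) r := by
    apply intervalIntegral.integral_hasDerivAt_right (invAt_intble hαc hαpos one_pos hr)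
      ((invAt_contOn hαc hαpos).stronglyMeasurableAtFilter isOpen_Ioi r hr)
      (((invAt_contOn hαc hαpos) r hr).continuousAt (Ioi_mem_nhds hr))
  exact h.continuousAt

lemma inv_le_invAt {τ : ℝ} (hτ : 0 < τ) : τ⁻¹ ≤ (At α τ)⁻¹ :=
  one_div τ ▸ inv_anti₀ (At_pos hαpos hτ) (At_le_self hτ.le)

lemma etaF_le_log {r : ℝ} (hr0 : 0 < r) (hr1 : r ≤ 1) : etaF α r ≤ Real.log r := by
  have h1 : etaF α r - etaF α 1 = ∫ τ in (1:ℝ)..r, (At α τ)⁻¹ := etaF_sub hαc hαpos one_pos hr0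
  have h2 : etaF α 1 = 0 := by simp [etaF]
  have hmono : (∫ τ in r..(1:ℝ), τ⁻¹) ≤ ∫ τ in r..(1:ℝ), (At α τ)⁻¹ := by
    apply intervalIntegral.integral_mono_on hr1
    · apply ContinuousOn.intervalIntegrable
      apply continuousOn_inv₀.mono
      intro x hx; rw [uIcc_of_le hr1] at hx; exact (lt_of_lt_of_le hr0 hx.1).ne'
    · exact invAt_intble hαc hαpos hr0 one_pos
    · intro x hx; exact inv_le_invAt hαc hαpos (lt_of_lt_of_le hr0 hx.1)
  have hlog : (∫ τ in r..(1:ℝ), τ⁻¹) = Real.log (1 / r) := by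
    apply integral_inv
    rw [uIcc_of_le hr1]; intro h; exact absurd h.1 (not_le.mpr hr0)
  rw [intervalIntegral.integral_symm] at h1
  have h3 : Real.log (1/r) = - Real.log r := by rw [one_div, Real.log_inv]
  rw [h3] at hlog
  rw [h2] at h1
  linarith [hmono, h1, hlog]

lemma etaF_ge_log {r : ℝ} (hr1 : 1 ≤ r) : Real.log r ≤ etaF α r := by
  have h1 : etaF α r - etaF α 1 = ∫ τ in (1:ℝ)..r, (At α τ)⁻¹ :=
    etaF_sub hαc hαpos one_pos (lt_of_lt_of_le one_pos hr1)
  have h2 : etaF α 1 = 0 := by simp [etaF]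
  have hmono : (∫ τ in (1:ℝ)..r, τ⁻¹) ≤ ∫ τ in (1:ℝ)..r, (At α τ)⁻¹ := by
    apply intervalIntegral.integral_mono_on hr1
    · apply ContinuousOn.intervalIntegrable
      apply continuousOn_inv₀.mono
      intro x hx; rw [uIcc_of_le hr1] at hx; exact (lt_of_lt_of_le one_pos hx.1).ne'
    · exact invAt_intble hαc hαpos one_pos (lt_of_lt_of_le one_pos hr1)
    · intro x hx; exact inv_le_invAt hαc hαpos (lt_of_lt_of_le one_pos hx.1)
  have hlog : (∫ τ in (1:ℝ)..r, τ⁻¹) = Real.log (r / 1) := by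
    apply integral_inv
    rw [uIcc_of_le hr1]; intro h; exact absurd h.1 (not_le.mpr one_pos)
  rw [div_one] at hlog
  linarith [hmono, h1, hlog]

lemma etaH_cont : Continuous (etaH α) := by
  apply continuous_iff_continuousAt.mpr
  intro x
  exact (etaF_continuousAt hαc hαpos (Real.exp_pos x)).comp Real.continuous_exp.continuousAt

lemma etaH_strictMono : StrictMono (etaH α) := fun a b hab =>
  etaF_strictMonoOn hαc hαpos (Real.exp_pos a) (Real.exp_pos b) (Real.exp_lt_exp.mpr hab)

lemma etaH_atTop : Tendsto (etaH α) atTop atTop := by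
  apply tendsto_atTop_mono' _ _ tendsto_id
  filter_upwards [eventually_ge_atTop (0:ℝ)] with x hx
  have := etaF_ge_log hαc hαpos (α := α) (Real.one_le_exp hx)
  rwa [Real.log_exp] at this

lemma etaH_atBot : Tendsto (etaH α) atBot atBot := by
  apply tendsto_atBot_mono' _ _ tendsto_id
  filter_upwards [eventually_le_atBot (0:ℝ)] with x hx
  have := etaF_le_log hαc hαpos (α := α) (Real.exp_pos x) (Real.exp_le_one_iff.mpr hx)
  rwa [Real.log_exp] at this

lemma etaH_surj : Function.Surjective (etaH α) :=
  (etaH_cont hαc hαpos).surjective (etaH_atTop hαc hαpos) (etaH_atBot hαc hαpos)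

end EtaLemmas

theorem comparison
    (hαc : ContinuousOn α (Ici 0)) (hαnn : ∀ s ∈ Ici (0:ℝ), 0 ≤ α s)
    (hαpos : ∀ s > (0:ℝ), 0 < α s)
    (hgc : ContinuousOn g (Ici 0)) (hgpos : ∀ s ∈ Ici (0:ℝ), 0 < g s)
    {T : ℝ} (hT : 0 < T) {y y' : ℝ → ℝ}
    (hynn : ∀ t ∈ Icc (0:ℝ) T, 0 ≤ y t)
    (hInt : IntegrableOn y' (Icc 0 T))
    (hrep : ∀ t ∈ Icc (0:ℝ) T, y t = y 0 + ∫ s in (0:ℝ)..t, y' s)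
    (hae : ∀ᵐ t ∂(volume.restrict (Icc (0:ℝ) T)), y' t ≤ -g t * α (y t)) :
    (∀ a b : ℝ, 0 ≤ a → a ≤ b → b ≤ T → y b ≤ y a) ∧
    ∀ t ∈ Icc (0:ℝ) T, 0 < y t → etaF α (y t) ≤ etaF α (y 0) - Gt g t := by
  -- continuity of y
  have hycont : ContinuousOn y (Icc 0 T) := by
    have h0 : ContinuousOn (fun x => ∫ s in (0:ℝ)..x, y' s) (Icc 0 T) := by
      apply (intervalIntegral.continuousOn_primitive hInt).congr
      intro x hx
      exact intervalIntegral.integral_of_le hx.1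
    exact (continuousOn_const.add h0).congr fun t ht => hrep t ht
  -- interval integrability of y'
  have hii : ∀ a b : ℝ, 0 ≤ a → a ≤ b → b ≤ T → IntervalIntegrable y' volume a b := by
    intro a b ha hab hbT
    have hsub : uIcc a b ⊆ Icc 0 T := by
      rw [uIcc_of_le hab]; exact Icc_subset_Icc ha hbT
    exact (hInt.mono_set hsub).intervalIntegrable
  -- increments
  have hsub : ∀ a b : ℝ, 0 ≤ a → a ≤ b → b ≤ T → y b - y a = ∫ τ in a..b, y' τ := by
    intro a b ha hab hbT
    rw [hrep b ⟨le_trans ha hab, hbT⟩, hrep a ⟨ha, le_trans hab hbT⟩]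
    have := intervalIntegral.integral_interval_sub_left
      (hii 0 b (le_refl 0) (le_trans ha hab) hbT) (hii 0 a (le_refl 0) ha (le_trans hab hbT))
    linarith [this]
  -- key integral inequality
  have hkey : ∀ a b : ℝ, 0 ≤ a → a ≤ b → b ≤ T →
      y b - y a ≤ - ∫ τ in a..b, gt' g τ * At α (y τ) := by
    intro a b ha hab hbT
    rw [hsub a b ha hab hbT]
    have hIcc : Icc a b ⊆ Icc 0 T := Icc_subset_Icc ha hbT
    have hcont : ContinuousOn (fun τ => gt' g τ * At α (y τ)) (Icc a b) :=
      ((gt'_cont hgc).continuousOn).mul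
        ((At_cont hαc).comp_continuousOn (hycont.mono hIcc))
    have hint2 : IntervalIntegrable (fun τ => -(gt' g τ * At α (y τ))) volume a b := by
      apply ContinuousOn.intervalIntegrable
      rw [uIcc_of_le hab]
      exact hcont.neg
    have hmono : (∫ τ in a..b, y' τ) ≤ ∫ τ in a..b, -(gt' g τ * At α (y τ)) := by
      apply intervalIntegral.integral_mono_ae_restrict hab (hii a b ha hab hbT) hint2
      have h1 : ∀ᵐ τ ∂(volume.restrict (Icc a b)), y' τ ≤ -g τ * α (y τ) :=
        ae_restrict_of_ae_restrict_of_subset hIcc hae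
      have h2 : ∀ᵐ τ ∂(volume.restrict (Icc a b)), τ ∈ Icc a b :=
        ae_restrict_mem measurableSet_Icc
      filter_upwards [h1, h2] with τ hτ1 hτ2
      have hτ0 : 0 ≤ τ := le_trans ha hτ2.1
      have hτT : τ ≤ T := le_trans hτ2.2 hbT
      have hy : (0:ℝ) ≤ y τ := hynn τ ⟨hτ0, hτT⟩
      have hAle : At α (y τ) ≤ α (y τ) := At_le_alpha hy
      have hgτ : 0 < g τ := hgpos τ hτ0
      have hgg : gt' g τ = g τ := gt'_eq hτ0
      calc y' τ ≤ -g τ * α (y τ) := hτ1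
        _ ≤ -(gt' g τ * At α (y τ)) := by rw [hgg]; nlinarith
    rw [intervalIntegral.integral_neg] at hmono
    linarith
  -- y is antitone
  have hanti : ∀ a b : ℝ, 0 ≤ a → a ≤ b → b ≤ T → y b ≤ y a := by
    intro a b ha hab hbT
    have h1 := hkey a b ha hab hbT
    have h2 : 0 ≤ ∫ τ in a..b, gt' g τ * At α (y τ) :=
      intervalIntegral.integral_nonneg hab
        (fun u _ => mul_nonneg (gt'_pos hgpos u).le (At_nonneg hαnn _))
    linarith
  -- main part
  refine ⟨hanti, ?_⟩
  intro t' ht' hyt'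
  have hypos : ∀ u ∈ Icc (0:ℝ) t', 0 < y u := fun u hu =>
    lt_of_lt_of_le hyt' (hanti u t' hu.1 hu.2 ht'.2)
  have hIcc' : Icc (0:ℝ) t' ⊆ Icc 0 T := Icc_subset_Icc le_rfl ht'.2
  -- fix ε and prove the ε-estimate
  have hmain : ∀ ε : ℝ, 0 < ε → ε < 1 →
      (1 - ε) * Gt g t' ≤ etaF α (y 0) - etaF α (y t') := by
    intro ε hε0 hε1
    set F : ℝ → ℝ := fun u => etaF α (y 0) - etaF α (y u) - (1 - ε) * Gt g u with hF
    have hFcont : ContinuousOn F (Icc 0 t') := by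
      apply ContinuousOn.sub
      apply ContinuousOn.sub continuousOn_const
      · intro u hu
        exact ((etaF_continuousAt hαc hαpos (hypos u hu)).comp_continuousWithinAt
          ((hycont.mono hIcc') u hu))
      · exact (continuous_const.mul (Gt_cont hgc)).continuousOn
    have hF0 : F 0 = 0 := by simp [hF, Gt_zero]
    -- local step
    have hstep : ∀ u, 0 ≤ u → u < t' → ∃ δ > 0, ∀ v, u ≤ v → v ≤ min (u + δ) t' →
        (1 - ε) * (Gt g v - Gt g u) ≤ etaF α (y u) - etaF α (y v) := by
      intro u hu0 hut'
      have huI : u ∈ Icc (0:ℝ) t' := ⟨hu0, hut'.le⟩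
      set c := At α (y u) with hc
      have hcpos : 0 < c := At_pos hαpos (hypos u huI)
      -- continuity of At at y u
      obtain ⟨ρ, hρ0, hρ⟩ : ∃ ρ > 0, ∀ x, |x - y u| < ρ → |At α x - c| < ε * c / 2 := by
        have hpos : 0 < ε * c / 2 := by nlinarith
        obtain ⟨ρ, hρ0, hρ⟩ := Metric.continuousAt_iff.mp ((At_cont hαc).continuousAt) _ hpos
        refine ⟨ρ, hρ0, fun x hx => ?_⟩
        have := hρ (x := x) (by simpa [Real.dist_eq] using hx)
        simpa [Real.dist_eq] using this
      -- continuity of y at u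
      obtain ⟨δ, hδ0, hδ⟩ : ∃ δ > 0, ∀ v ∈ Icc (0:ℝ) T, |v - u| < δ → |y v - y u| < ρ := by
        have h := Metric.continuousWithinAt_iff.mp (hycont u (hIcc' huI)) ρ hρ0
        obtain ⟨δ, hδ0, hδ⟩ := h
        exact ⟨δ, hδ0, fun v hv hvd => hδ hv (by simpa [Real.dist_eq] using hvd)⟩
      refine ⟨δ / 2, half_pos hδ0, ?_⟩
      intro v huv hvle
      have hvt' : v ≤ t' := le_trans hvle (min_le_right _ _)
      have hv0 : 0 ≤ v := le_trans hu0 huv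
      have hvT : v ≤ T := le_trans hvt' ht'.2
      have hclose : ∀ w, u ≤ w → w ≤ v → |y w - y u| < ρ := by
        intro w huw hwv
        apply hδ w ⟨le_trans hu0 huw, le_trans hwv hvT⟩
        have h1 : w - u ≤ δ / 2 := by
          have := le_trans hwv hvle
          have := min_le_left (u + δ/2) t'
          linarith [le_trans hwv (le_trans hvle (min_le_left (u + δ/2) t'))]
        rw [abs_of_nonneg (by linarith)]
        linarith
      have hyvu : y v ≤ y u := hanti u v hu0 huv hvT
      have hyv0 : 0 < y v := hypos v ⟨hv0, hvt'⟩
      have hyu0 : 0 < y u := hypos u huI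
      -- Claim 1
      have hGsub := Gt_sub (g := g) hgc u v
      have hGnn : 0 ≤ Gt g v - Gt g u := by
        rw [hGsub]
        exact intervalIntegral.integral_nonneg huv fun w _ => (gt'_pos hgpos w).le
      have hclaim1 : (1 - ε/2) * c * (Gt g v - Gt g u) ≤ y u - y v := by
        have h1 := hkey u v hu0 huv hvT
        have h2 : (∫ τ in u..v, gt' g τ * ((1 - ε/2) * c)) ≤
            ∫ τ in u..v, gt' g τ * At α (y τ) := by
          apply intervalIntegral.integral_mono_on huv
          · exact (((gt'_cont hgc).mul continuous_const).continuousOn).intervalIntegrable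
          · apply ContinuousOn.intervalIntegrable
            rw [uIcc_of_le huv]
            exact ((gt'_cont hgc).continuousOn).mul
              ((At_cont hαc).comp_continuousOn
                ((hycont.mono (Icc_subset_Icc hu0 hvT))))
          · intro w hw
            have hA : |At α (y w) - c| < ε * c / 2 := hρ _ (hclose w hw.1 hw.2)
            have : (1 - ε/2) * c ≤ At α (y w) := by
              rw [abs_lt] at hA; linarith
            exact mul_le_mul_of_nonneg_left this (gt'_pos hgpos w).le
        have h3 : (∫ τ in u..v, gt' g τ * ((1 - ε/2) * c)) =
            (Gt g v - Gt g u) * ((1 - ε/2) * c) := by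
          rw [intervalIntegral.integral_mul_const, hGsub]
        nlinarith [h1, h2, h3]
      -- Claim 2
      have hetasub := etaF_sub hαc hαpos (α := α) hyv0 hyu0
      have hclaim2 : (y u - y v) / ((1 + ε/2) * c) ≤ etaF α (y u) - etaF α (y v) := by
        rw [hetasub]
        have h2 : (∫ τ in (y v)..(y u), ((1 + ε/2) * c)⁻¹) ≤
            ∫ τ in (y v)..(y u), (At α τ)⁻¹ := by
          apply intervalIntegral.integral_mono_on hyvu
          · exact intervalIntegrable_const
          · exact invAt_intble hαc hαpos hyv0 hyu0
          · intro τ hτ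
            have hτρ : |τ - y u| < ρ := by
              have := hclose v huv le_rfl
              rw [abs_lt] at this ⊢
              constructor <;> [linarith [hτ.1]; linarith [hτ.2]]
            have hA : |At α τ - c| < ε * c / 2 := hρ _ hτρ
            have h1 : At α τ ≤ (1 + ε/2) * c := by rw [abs_lt] at hA; linarith
            have h2 : 0 < At α τ := At_pos hαpos (lt_of_lt_of_le hyv0 hτ.1)
            exact inv_anti₀ h2 h1
        have h3 : (∫ τ in (y v)..(y u), ((1 + ε/2) * c)⁻¹) =
            (y u - y v) * ((1 + ε/2) * c)⁻¹ := by
          rw [intervalIntegral.integral_const, smul_eq_mul]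
        rw [h3] at h2
        rw [div_eq_mul_inv]
        exact h2
      -- combine
      have hden : 0 < (1 + ε/2) * c := by nlinarith
      have h4 : (1 - ε) * (Gt g v - Gt g u) * ((1 + ε/2) * c) ≤ y u - y v := by
        nlinarith [hclaim1, hGnn, hcpos, hε0, hε1,
          mul_nonneg (mul_nonneg hGnn hcpos.le) (mul_pos hε0 hε0).le]
      have h5 : (1 - ε) * (Gt g v - Gt g u) ≤ (y u - y v) / ((1 + ε/2) * c) :=
        (le_div_iff₀ hden).mpr h4
      exact le_trans h5 hclaim2
    -- continuous induction
    have hFt' : 0 ≤ F t' := by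
      set S : Set ℝ := {u | u ∈ Icc (0:ℝ) t' ∧ ∀ v ∈ Icc (0:ℝ) u, 0 ≤ F v} with hS
      have h0S : (0:ℝ) ∈ S := by
        refine ⟨⟨le_rfl, ht'.1⟩, ?_⟩
        intro v hv
        have hv0 : v = 0 := le_antisymm hv.2 hv.1
        rw [hv0, hF0]
      have hbdd : BddAbove S := ⟨t', fun x hx => hx.1.2⟩
      set c₀ := sSup S with hc₀
      have hc₀mem : c₀ ∈ Icc (0:ℝ) t' :=
        ⟨le_csSup hbdd h0S, csSup_le ⟨0, h0S⟩ fun x hx => hx.1.2⟩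
      have hlt : ∀ v, 0 ≤ v → v < c₀ → 0 ≤ F v := by
        intro v hv0 hvc
        obtain ⟨u, huS, hvu⟩ := exists_lt_of_lt_csSup ⟨0, h0S⟩ hvc
        exact huS.2 v ⟨hv0, hvu.le⟩
      have hFc₀ : 0 ≤ F c₀ := by
        rcases eq_or_lt_of_le hc₀mem.1 with h | h
        · rw [← h, hF0]
        · have hcl : c₀ ∈ closure (Ico (0:ℝ) c₀) := by
            rw [closure_Ico h.ne]
            exact ⟨hc₀mem.1, le_rfl⟩
          have hne : (nhdsWithin c₀ (Ico (0:ℝ) c₀)).NeBot :=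
            mem_closure_iff_nhdsWithin_neBot.mp hcl
          have htend : Tendsto F (nhdsWithin c₀ (Ico (0:ℝ) c₀)) (nhds (F c₀)) :=
            (hFcont c₀ hc₀mem).mono_left
              (nhdsWithin_mono _ (fun x hx => ⟨hx.1, le_trans hx.2.le hc₀mem.2⟩))
          exact ge_of_tendsto htend
            (eventually_nhdsWithin_of_forall fun v hv => hlt v hv.1 hv.2)
      have hc₀S : c₀ ∈ S := by
        refine ⟨hc₀mem, fun v hv => ?_⟩
        rcases eq_or_lt_of_le hv.2 with he | hl
        · rw [he]; exact hFc₀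
        · exact hlt v hv.1 hl
      have hc₀t' : c₀ = t' := by
        by_contra hnee
        have hlt' : c₀ < t' := lt_of_le_of_ne hc₀mem.2 hnee
        obtain ⟨δ, hδ0, hδ⟩ := hstep c₀ hc₀mem.1 hlt'
        set w := min (c₀ + δ) t' with hw
        have hcw : c₀ < w := lt_min (by linarith) hlt'
        have hwS : w ∈ S := by
          refine ⟨⟨le_trans hc₀mem.1 hcw.le, min_le_right _ _⟩, ?_⟩
          intro v hv
          rcases le_or_gt v c₀ with h | h
          · exact hc₀S.2 v ⟨hv.1, h⟩
          · have hd := hδ v h.le hv.2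
            have hFv : F v = F c₀ +
                ((etaF α (y c₀) - etaF α (y v)) - (1-ε) * (Gt g v - Gt g c₀)) := by
              simp only [hF]; ring
            rw [hFv]
            linarith [hd, hFc₀]
        have := le_csSup hbdd hwS
        linarith
      rw [← hc₀t']; exact hFc₀
    simp only [hF] at hFt'
    linarith
  -- pass to the limit ε → 0
  have hGnn : 0 ≤ Gt g t' := by
    have h1 := Gt_sub (g := g) hgc 0 t'
    rw [Gt_zero] at h1
    have h2 : 0 ≤ ∫ τ in (0:ℝ)..t', gt' g τ :=
      intervalIntegral.integral_nonneg ht'.1 (fun u _ => (gt'_pos hgpos u).le)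
    linarith
  set D := etaF α (y 0) - etaF α (y t') with hD
  have hfin : Gt g t' ≤ D := by
    by_contra hcon
    push_neg at hcon
    have hD0 : 0 ≤ D := by
      have := hmain (1/2) (by norm_num) (by norm_num)
      nlinarith [hGnn]
    have hGpos : 0 < Gt g t' := lt_of_le_of_lt hD0 hcon
    set ε := (Gt g t' - D) / (2 * Gt g t') with hε
    have hε0 : 0 < ε := div_pos (by linarith) (by linarith)
    have hε1 : ε < 1 := by
      rw [hε, div_lt_one (by linarith)]
      linarith
    have hm := hmain ε hε0 hε1
    have hεG : ε * Gt g t' = (Gt g t' - D) / 2 := by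
      rw [hε]; field_simp
    nlinarith [hm, hεG]
  linarith

end KLAux

open KLAux

/-- Comparison principle: `y' ≤ -g(t) α(y)` a.e. implies a 𝒦𝓛 estimate. -/
theorem stmt_0 (α g : ℝ → ℝ)
    (hαc : ContinuousOn α (Ici 0)) (hαnn : ∀ s ∈ Ici (0:ℝ), 0 ≤ α s)
    (hαpos : ∀ s > (0:ℝ), 0 < α s)
    (hgc : ContinuousOn g (Ici 0)) (hgpos : ∀ s ∈ Ici (0:ℝ), 0 < g s)
    (hG : Tendsto (fun s => ∫ τ in (0:ℝ)..s, g τ) atTop atTop) :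
    ∃ β : ℝ → ℝ → ℝ, ClassKL β ∧
      ∀ T > (0:ℝ), ∀ y₀ ≥ (0:ℝ), ∀ y y' : ℝ → ℝ,
        y 0 = y₀ →
        (∀ t ∈ Icc (0:ℝ) T, 0 ≤ y t) →
        IsACDeriv T y y' →
        (∀ᵐ t ∂(volume.restrict (Icc (0:ℝ) T)), y' t ≤ -g t * α (y t)) →
        ∀ t ∈ Icc (0:ℝ) T, y t ≤ β y₀ t := by
  classical
  -- Gt tends to infinity
  have hGt_top : Tendsto (Gt g) atTop atTop := by
    apply hG.congr'
    filter_upwards [eventually_ge_atTop (0:ℝ)] with s hs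
    exact (Gt_eq hs).symm
  have hGt_nonneg : ∀ t ≥ (0:ℝ), 0 ≤ Gt g t := by
    intro t ht
    have := (Gt_strictMono hgc hgpos).monotone ht
    rwa [Gt_zero] at this
  -- the order isomorphism
  set Φ : ℝ ≃o ℝ :=
    StrictMono.orderIsoOfSurjective _ (etaH_strictMono hαc hαpos) (etaH_surj hαc hαpos)
    with hΦdef
  have hΦ : ∀ x, Φ x = etaH α x := fun x => rfl
  have hΦsymm_cont : Continuous (Φ.symm : ℝ → ℝ) := Φ.symm.toHomeomorph.continuous
  have hsymm_log : ∀ r : ℝ, 0 < r → Φ.symm (etaF α r) = Real.log r := by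
    intro r hr
    have h1 : Φ (Real.log r) = etaF α r := by
      rw [hΦ]; unfold etaH; rw [Real.exp_log hr]
    rw [← h1, OrderIso.symm_apply_apply]
  set β : ℝ → ℝ → ℝ :=
    fun r t => if r ≤ 0 then 0 else Real.exp (Φ.symm (etaF α r - Gt g t)) with hβ
  have hβ0 : ∀ t, β 0 t = 0 := fun t => by simp [hβ]
  have hβnn : ∀ r t, 0 ≤ β r t := by
    intro r t
    by_cases h : r ≤ 0 <;> simp [hβ, h, Real.exp_pos, le_of_lt (Real.exp_pos _)]
  have hβpos : ∀ r : ℝ, 0 < r → ∀ t, 0 < β r t := by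
    intro r hr t
    simp [hβ, not_le.mpr hr, Real.exp_pos]
  have hβeq : ∀ r : ℝ, 0 < r → ∀ t, β r t = Real.exp (Φ.symm (etaF α r - Gt g t)) := by
    intro r hr t; simp [hβ, not_le.mpr hr]
  have hβle : ∀ r : ℝ, 0 < r → ∀ t ≥ (0:ℝ), β r t ≤ r := by
    intro r hr t ht
    rw [hβeq r hr t]
    have h1 : Φ.symm (etaF α r - Gt g t) ≤ Φ.symm (etaF α r) :=
      Φ.symm.monotone (by linarith [hGt_nonneg t ht])
    calc Real.exp (Φ.symm (etaF α r - Gt g t)) ≤ Real.exp (Φ.symm (etaF α r)) :=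
          Real.exp_le_exp.mpr h1
      _ = r := by rw [hsymm_log r hr, Real.exp_log hr]
  refine ⟨β, ⟨?_, ?_, ?_⟩, ?_⟩
  · -- joint continuity
    rintro ⟨r, t⟩ ⟨hr, ht⟩
    dsimp only at hr ht
    rcases eq_or_lt_of_le (mem_Ici.mp hr) with h0 | h0
    · -- r = 0 : squeeze
      subst h0
      have key : Tendsto (fun p : ℝ × ℝ => β p.1 p.2)
          (nhdsWithin ((0:ℝ), t) (Ici 0 ×ˢ Ici 0)) (nhds 0) := by
        apply tendsto_of_tendsto_of_tendsto_of_le_of_le'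
          (g := fun _ : ℝ × ℝ => (0:ℝ)) (h := fun p : ℝ × ℝ => p.1)
          tendsto_const_nhds ?_ ?_ ?_
        · -- upper bound function tendsto : fun p => p.1
          exact (continuous_fst.tendsto (((0:ℝ), t) : ℝ × ℝ)).mono_left
            (nhdsWithin_le_nhds (s := (Ici 0 ×ˢ Ici 0 : Set (ℝ × ℝ))))
        · exact eventually_nhdsWithin_of_forall fun p _ => hβnn p.1 p.2
        · apply eventually_nhdsWithin_of_forall
          rintro ⟨a, b⟩ ⟨ha, hb⟩
          dsimp only at ha hb ⊢
          rcases eq_or_lt_of_le (mem_Ici.mp ha) with h1 | h1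
          · rw [← h1, hβ0]
          · exact hβle a h1 b hb
      unfold ContinuousWithinAt
      convert key using 2
      exact hβ0 t
    · -- r > 0
      apply ContinuousAt.continuousWithinAt
      have hopen : IsOpen {p : ℝ × ℝ | 0 < p.1} := isOpen_lt continuous_const continuous_fst
      have hev : (fun p : ℝ × ℝ => Real.exp (Φ.symm (etaF α p.1 - Gt g p.2)))
          =ᶠ[nhds (r, t)] fun p : ℝ × ℝ => β p.1 p.2 := by
        filter_upwards [hopen.mem_nhds h0] with q hq
        rw [hβeq q.1 hq q.2]
      apply ContinuousAt.congr _ hev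
      apply Real.continuous_exp.continuousAt.comp
      apply hΦsymm_cont.continuousAt.comp
      apply ContinuousAt.sub
      · exact ContinuousAt.comp (x := (r, t)) (etaF_continuousAt hαc hαpos h0) continuousAt_fst
      · exact ((Gt_cont hgc).continuousAt).comp continuousAt_snd
  · -- ClassK in first variable
    intro t ht
    refine ⟨?_, ?_, hβ0 t, fun s _ => hβnn s t⟩
    · -- continuity
      intro s hs
      rcases eq_or_lt_of_le (mem_Ici.mp hs) with h0 | h0
      · -- squeeze at 0
        subst h0
        have key : Tendsto (fun x : ℝ => β x t) (nhdsWithin (0:ℝ) (Ici 0)) (nhds 0) := by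
          apply tendsto_of_tendsto_of_tendsto_of_le_of_le'
            (g := fun _ : ℝ => (0:ℝ)) (h := fun x : ℝ => x)
            tendsto_const_nhds ?_ ?_ ?_
          · exact tendsto_id.mono_left nhdsWithin_le_nhds
          · exact eventually_nhdsWithin_of_forall fun x _ => hβnn x t
          · apply eventually_nhdsWithin_of_forall
            intro x hx
            rcases eq_or_lt_of_le (mem_Ici.mp hx) with h1 | h1
            · rw [← h1, hβ0]
            · exact hβle x h1 t ht
        unfold ContinuousWithinAt
        convert key using 2
        exact hβ0 t
      · apply ContinuousAt.continuousWithinAt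
        have hev : (fun x : ℝ => Real.exp (Φ.symm (etaF α x - Gt g t)))
            =ᶠ[nhds s] fun x => β x t := by
          filter_upwards [(isOpen_lt continuous_const continuous_id).mem_nhds h0] with q hq
          rw [hβeq q hq t]
        apply ContinuousAt.congr _ hev
        apply Real.continuous_exp.continuousAt.comp
        apply hΦsymm_cont.continuousAt.comp
        exact (etaF_continuousAt hαc hαpos h0).sub continuousAt_const
    · -- strict mono
      intro a ha b hb hab
      rcases eq_or_lt_of_le (mem_Ici.mp ha) with h0 | h0
      · show β a t < β b t
        rw [← h0, hβ0]
        exact hβpos b (h0 ▸ hab) t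
      · show β a t < β b t
        rw [hβeq a h0 t, hβeq b (lt_trans h0 hab) t]
        apply Real.exp_lt_exp.mpr
        apply Φ.symm.strictMono
        have := etaF_strictMonoOn hαc hαpos h0 (lt_trans h0 hab) hab
        linarith
  · -- strict anti and decay in t
    intro r hr
    constructor
    · intro t1 _ t2 _ h12
      show β r t2 < β r t1
      rw [hβeq r hr t1, hβeq r hr t2]
      apply Real.exp_lt_exp.mpr
      apply Φ.symm.strictMono
      have := Gt_strictMono hgc hgpos h12
      linarith
    · have hfun : (fun t => β r t) = fun t => Real.exp (Φ.symm (etaF α r - Gt g t)) := by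
        funext t; exact hβeq r hr t
      rw [hfun]
      apply Real.tendsto_exp_atBot.comp
      apply (Φ.symm.monotone.tendsto_atBot_atBot (fun b => ⟨Φ b, by simp⟩)).comp
      apply tendsto_atBot_add_const_left _ (etaF α r)
      exact (tendsto_neg_atTop_atBot).comp hGt_top
  · -- the comparison estimate
    intro T hT y₀ hy₀ y y' hy0 hynn hac hae t ht
    obtain ⟨hanti, hcomp⟩ := comparison hαc hαnn hαpos hgc hgpos hT hynn hac.1 hac.2 hae
    rcases lt_or_ge 0 (y t) with hyt | hyt
    · -- y t > 0; then y₀ ≥ y t > 0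
      have hy₀pos : 0 < y₀ := by
        rw [← hy0]
        exact lt_of_lt_of_le hyt (hanti 0 t le_rfl ht.1 ht.2)
      have h1 := hcomp t ht hyt
      rw [hy0] at h1
      rw [hβeq y₀ hy₀pos t]
      have h2 : Φ.symm (etaF α (y t)) ≤ Φ.symm (etaF α y₀ - Gt g t) := Φ.symm.monotone h1
      rw [hsymm_log (y t) hyt] at h2
      calc y t = Real.exp (Real.log (y t)) := (Real.exp_log hyt).symm
        _ ≤ Real.exp (Φ.symm (etaF α y₀ - Gt g t)) := Real.exp_le_exp.mpr h2
    · have : y t = 0 := le_antisymm hyt (hynn t ht)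
      rw [this]
      exact hβnn y₀ t
end
end

section
/- Let α : [0,∞) → [0,∞) be continuous with α(s) > 0 for all s > 0, and let g : [0,∞) → [0,∞) be continuous with g(s) > 0 for all s ≥ 0 and ∫₀^s g(τ)dτ → +∞ as s → +∞. Put ᾱ(s) := min{s, α(s)}, define η(s) := ∫_s^1 (1/ᾱ(τ))dτ for s > 0, and let G(t) := ∫₀^t g(τ)dτ. Then η is strictly decreasing on (0,∞) with η(s) → +∞ as s → 0⁺, and the function β defined by β(0,t) := 0 and β(s,t) := η⁻¹(η(s) + G(t)) for s > 0 satisfies: β is continuous on [0,∞) × [0,∞), β(·,t) is strictly increasing with β(0,t) = 0 for every t ≥ 0, β(s,·) is strictly decreasing for every s > 0, β(s,t) → 0 as t → +∞ for every fixed s ≥ 0, and β(s,0) = s for all s ≥ 0; in particular β is of class 𝒦𝓛. -/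
open Set MeasureTheory Filter

noncomputable section

/-- Explicit construction of the 𝒦𝓛 comparison function via the decreasing function `η`. -/
theorem stmt_2 (α g : ℝ → ℝ)
    (hαc : ContinuousOn α (Ici 0)) (hαnn : ∀ s ∈ Ici (0:ℝ), 0 ≤ α s)
    (hαpos : ∀ s > (0:ℝ), 0 < α s)
    (hgc : ContinuousOn g (Ici 0)) (hgpos : ∀ s ∈ Ici (0:ℝ), 0 < g s)
    (hG : Tendsto (fun s => ∫ τ in (0:ℝ)..s, g τ) atTop atTop) :
    let abar : ℝ → ℝ := fun s => min s (α s)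
    let η : ℝ → ℝ := fun s => ∫ τ in s..1, (abar τ)⁻¹
    let G : ℝ → ℝ := fun t => ∫ τ in (0:ℝ)..t, g τ
    StrictAntiOn η (Ioi 0) ∧
    Tendsto η (nhdsWithin 0 (Ioi 0)) atTop ∧
    ∃ ηinv : ℝ → ℝ, (∀ s > (0:ℝ), ηinv (η s) = s) ∧
      (let β : ℝ → ℝ → ℝ := fun s t => if s = 0 then 0 else ηinv (η s + G t)
       ClassKL β ∧ ∀ s ≥ (0:ℝ), β s 0 = s) := by
  classical
  intro abar η G
  have habar_cont : ContinuousOn abar (Ici 0) := continuousOn_id.inf hαc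
  have habar_pos : ∀ s ∈ Ioi (0:ℝ), 0 < abar s := fun s hs => lt_min hs (hαpos s hs)
  set f : ℝ → ℝ := fun τ => (abar τ)⁻¹ with hfdef
  have hη_def : ∀ s, η s = ∫ τ in s..1, f τ := fun s => rfl
  have hf_cont : ContinuousOn f (Ioi 0) :=
    (habar_cont.mono (Ioi_subset_Ici le_rfl)).inv₀ fun s hs => (habar_pos s hs).ne'
  have hf_pos : ∀ τ ∈ Ioi (0:ℝ), 0 < f τ := fun τ hτ => inv_pos.2 (habar_pos τ hτ)
  have hsub : ∀ {a b : ℝ}, 0 < a → 0 < b → uIcc a b ⊆ Ioi 0 := fun ha hb =>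
    ordConnected_Ioi.uIcc_subset ha hb
  have hf_int : ∀ {a b : ℝ}, 0 < a → 0 < b → IntervalIntegrable f volume a b :=
    fun ha hb => (hf_cont.mono (hsub ha hb)).intervalIntegrable
  have hη_add : ∀ a b : ℝ, 0 < a → 0 < b →
      (∫ τ in a..b, f τ) + η b = η a := by
    intro a b ha hb
    rw [hη_def, hη_def]
    exact intervalIntegral.integral_add_adjacent_intervals (hf_int ha hb) (hf_int hb one_pos)
  have hη_anti : StrictAntiOn η (Ioi 0) := by
    intro a ha b hb hab
    have h1 := hη_add a b ha hb
    have h2 : 0 < ∫ τ in a..b, f τ :=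
      intervalIntegral.intervalIntegral_pos_of_pos_on (hf_int ha hb)
        (fun x hx => hf_pos x (lt_trans ha hx.1)) hab
    linarith
  have hη_contAt : ∀ s₀ ∈ Ioi (0:ℝ), ContinuousAt η s₀ := by
    intro s₀ hs₀
    simp only [mem_Ioi] at hs₀
    set c : ℝ := min (s₀ / 2) 2⁻¹ with hc
    have hc0 : 0 < c := lt_min (by linarith) (by norm_num)
    have hcs : c < s₀ := lt_of_le_of_lt (min_le_left _ _) (by linarith)
    have hc1 : c ≤ 1 := le_trans (min_le_right _ _) (by norm_num)
    set ft : ℝ → ℝ := fun τ => (abar (max τ c))⁻¹ with hft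
    have h1 : Continuous ft := by
      have h1a : Continuous fun τ : ℝ => abar (max τ c) :=
        habar_cont.comp_continuous (continuous_id.max continuous_const)
          fun x => le_trans hc0.le (le_max_right _ _)
      exact h1a.inv₀ fun x => (habar_pos _ (lt_of_lt_of_le hc0 (le_max_right x c))).ne'
    have heq : ∀ s ∈ Ioi c, η s = ∫ τ in s..1, ft τ := by
      intro s hs
      rw [hη_def]
      apply intervalIntegral.integral_congr
      intro τ hτ
      have hτc : c ≤ τ := le_trans (le_min (le_of_lt hs) hc1) hτ.1
      simp only [hft, hfdef, max_eq_left hτc]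
    have h2 : Continuous fun s : ℝ => ∫ τ in s..1, ft τ := by
      have h2a := intervalIntegral.continuous_primitive (μ := volume)
        (fun a b => h1.intervalIntegrable a b) 1
      have : (fun s : ℝ => ∫ τ in s..1, ft τ) = fun s => -(∫ τ in (1:ℝ)..s, ft τ) := by
        funext s; rw [intervalIntegral.integral_symm]
      rw [this]
      exact h2a.neg
    apply h2.continuousAt.congr
    filter_upwards [isOpen_Ioi.mem_nhds (show c < s₀ from hcs)] with x hx
    exact (heq x hx).symm
  have hη_cont : ContinuousOn η (Ioi 0) := fun s hs =>
    (hη_contAt s hs).continuousWithinAt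
  have hη_top : Tendsto η (nhdsWithin 0 (Ioi 0)) atTop := by
    have hlog : Tendsto (fun s : ℝ => -Real.log s) (nhdsWithin 0 (Ioi 0)) atTop :=
      tendsto_neg_atBot_atTop.comp Real.tendsto_log_nhdsGT_zero
    apply tendsto_atTop_mono' _ _ hlog
    filter_upwards [Ioo_mem_nhdsGT_of_mem (left_mem_Ico.2 one_pos)] with s hs
    have hs0 : (0:ℝ) < s := hs.1
    have hint1 : IntervalIntegrable (fun x : ℝ => x⁻¹) volume s 1 :=
      ((continuousOn_inv₀.mono (fun x hx => ne_of_gt (hsub hs0 one_pos hx))).intervalIntegrable)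
    have hmono : (∫ τ in s..1, τ⁻¹) ≤ ∫ τ in s..1, f τ := by
      apply intervalIntegral.integral_mono_on hs.2.le hint1 (hf_int hs0 one_pos)
      intro x hx
      have hx0 : 0 < x := lt_of_lt_of_le hs0 hx.1
      exact inv_anti₀ (habar_pos x hx0) (min_le_left _ _)
    have hval : (∫ τ in s..1, τ⁻¹) = -Real.log s := by
      rw [integral_inv_of_pos hs0 one_pos, one_div, Real.log_inv]
    rw [← hη_def] at hmono
    linarith [hmono, hval.symm.le]
  refine ⟨hη_anti, hη_top, ?_⟩
  -- G facts
  set gt : ℝ → ℝ := fun t => g (max t 0) with hgt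
  have hgtc : Continuous gt :=
    hgc.comp_continuous (continuous_id.max continuous_const) fun x => mem_Ici.2 (le_max_right _ _)
  have hgtpos : ∀ t, 0 < gt t := fun t => hgpos _ (mem_Ici.2 (le_max_right _ _))
  have hG_def : ∀ t, G t = ∫ τ in (0:ℝ)..t, g τ := fun t => rfl
  have hGeq : ∀ t, 0 ≤ t → G t = ∫ τ in (0:ℝ)..t, gt τ := by
    intro t ht
    rw [hG_def]
    apply intervalIntegral.integral_congr
    intro τ hτ
    have h0 : 0 ≤ τ := le_trans (le_min le_rfl ht) hτ.1
    simp only [hgt, max_eq_left h0]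
  have hGtc : Continuous fun t : ℝ => ∫ τ in (0:ℝ)..t, gt τ :=
    intervalIntegral.continuous_primitive (μ := volume)
      (fun a b => hgtc.intervalIntegrable a b) 0
  have hG0 : G 0 = 0 := by rw [hG_def]; exact intervalIntegral.integral_same
  have hGmono : StrictMonoOn G (Ici 0) := by
    intro a ha b hb hab
    rw [hGeq a ha, hGeq b hb]
    have hadd : (∫ τ in (0:ℝ)..a, gt τ) + ∫ τ in a..b, gt τ = ∫ τ in (0:ℝ)..b, gt τ :=
      intervalIntegral.integral_add_adjacent_intervals
        (hgtc.intervalIntegrable 0 a) (hgtc.intervalIntegrable a b)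
    have hpos : 0 < ∫ τ in a..b, gt τ :=
      intervalIntegral.intervalIntegral_pos_of_pos (hgtc.intervalIntegrable a b) hgtpos hab
    linarith
  have hGnonneg : ∀ t, 0 ≤ t → 0 ≤ G t := by
    intro t ht
    rcases eq_or_lt_of_le ht with h | h
    · rw [← h, hG0]
    · rw [← hG0]; exact (hGmono (mem_Ici.2 le_rfl) (mem_Ici.2 (le_of_lt h)) h).le
  -- surjectivity of η onto upper values
  have hmem : ∀ s : ℝ, 0 < s → ∀ c : ℝ, 0 ≤ c → ∃ s', 0 < s' ∧ s' ≤ s ∧ η s' = η s + c := by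
    intro s hs c hc
    have h1 : ∀ᶠ x in nhdsWithin 0 (Ioi 0), η s + c ≤ η x := hη_top.eventually_ge_atTop _
    have h2 : ∀ᶠ x in nhdsWithin (0:ℝ) (Ioi 0), x < s :=
      eventually_nhdsWithin_of_eventually_nhds (eventually_lt_nhds hs)
    have h3 : ∀ᶠ x in nhdsWithin (0:ℝ) (Ioi 0), x ∈ Ioi (0:ℝ) :=
      eventually_mem_nhdsWithin
    obtain ⟨s₀, hs₀big, hs₀lt, hs₀pos⟩ := (h1.and (h2.and h3)).exists
    have hIcc : Icc s₀ s ⊆ Ioi (0:ℝ) := fun x hx => lt_of_lt_of_le hs₀pos hx.1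
    have hIVT := intermediate_value_Icc' (le_of_lt hs₀lt) (hη_cont.mono hIcc)
    obtain ⟨s', hs'mem, hs'eq⟩ := hIVT ⟨le_add_of_nonneg_right hc, hs₀big⟩
    exact ⟨s', lt_of_lt_of_le hs₀pos hs'mem.1, hs'mem.2, hs'eq⟩
  -- inverse function
  set R : Set ℝ := {x | ∃ s, 0 < s ∧ η s = x} with hR
  set ηinv : ℝ → ℝ := fun x => if h : ∃ s, 0 < s ∧ η s = x then h.choose else 0 with hηinvdef
  have hinv_spec : ∀ x ∈ R, 0 < ηinv x ∧ η (ηinv x) = x := by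
    intro x hx
    have hx' : ∃ s, 0 < s ∧ η s = x := hx
    have he : ηinv x = hx'.choose := by simp only [hηinvdef]; exact dif_pos hx'
    rw [he]
    exact hx'.choose_spec
  have hinv_left : ∀ s, 0 < s → ηinv (η s) = s := by
    intro s hs
    have h : η s ∈ R := ⟨s, hs, rfl⟩
    obtain ⟨h1, h2⟩ := hinv_spec _ h
    exact hη_anti.injOn (mem_Ioi.2 h1) (mem_Ioi.2 hs) h2
  have hinv_lt : ∀ x ∈ R, ∀ y ∈ R, x < y → ηinv y < ηinv x := by
    intro x hx y hy hxy
    obtain ⟨hx1, hx2⟩ := hinv_spec x hx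
    obtain ⟨hy1, hy2⟩ := hinv_spec y hy
    by_contra h
    push_neg at h
    rcases h.eq_or_lt with he | hl
    · rw [← he] at hy2; rw [hx2] at hy2; exact absurd hy2 (ne_of_lt hxy)
    · have := hη_anti (mem_Ioi.2 hx1) (mem_Ioi.2 hy1) hl
      rw [hx2, hy2] at this; exact absurd hxy (not_lt.2 this.le)
  have hinv_small : ∀ ε : ℝ, 0 < ε → ∀ x ∈ R, η ε < x → ηinv x < ε := by
    intro ε hε x hx hlt
    obtain ⟨h1, h2⟩ := hinv_spec x hx
    by_contra h
    push_neg at h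
    rcases h.eq_or_lt with he | hl
    · rw [he, h2] at hlt; exact lt_irrefl _ hlt
    · have := hη_anti (mem_Ioi.2 hε) (mem_Ioi.2 h1) hl
      rw [h2] at this; exact absurd hlt (not_lt.2 this.le)
  have hinv_cont : ∀ x₀ ∈ R, ContinuousWithinAt ηinv R x₀ := by
    intro x₀ hx₀
    obtain ⟨h1, h2⟩ := hinv_spec x₀ hx₀
    rw [Metric.continuousWithinAt_iff]
    intro ε hε
    set s₀ := ηinv x₀ with hs₀
    set ε' : ℝ := min (ε / 2) (s₀ / 2) with hε'
    have hε'pos : 0 < ε' := lt_min (by linarith) (by linarith)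
    have hε'lt : ε' < s₀ := lt_of_le_of_lt (min_le_right _ _) (by linarith)
    have hε'ε : ε' < ε := lt_of_le_of_lt (min_le_left _ _) (by linarith)
    have hlow : η s₀ < η (s₀ - ε') :=
      hη_anti (mem_Ioi.2 (by linarith)) (mem_Ioi.2 h1) (by linarith)
    have hhigh : η (s₀ + ε') < η s₀ :=
      hη_anti (mem_Ioi.2 h1) (mem_Ioi.2 (by linarith)) (by linarith)
    refine ⟨min (η (s₀ - ε') - η s₀) (η s₀ - η (s₀ + ε')), lt_min (by linarith) (by linarith), ?_⟩
    intro x hxR hdist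
    obtain ⟨g1, g2⟩ := hinv_spec x hxR
    rw [Real.dist_eq] at hdist ⊢
    have habs := abs_lt.1 hdist
    have hx_lt : x < η (s₀ - ε') := by
      have := habs.2
      have h5 : min (η (s₀ - ε') - η s₀) (η s₀ - η (s₀ + ε')) ≤ η (s₀ - ε') - η s₀ :=
        min_le_left _ _
      rw [h2] at *
      linarith
    have hx_gt : η (s₀ + ε') < x := by
      have := habs.1
      have h5 : min (η (s₀ - ε') - η s₀) (η s₀ - η (s₀ + ε')) ≤ η s₀ - η (s₀ + ε') :=
        min_le_right _ _
      rw [h2] at *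
      linarith
    have hub : ηinv x < s₀ + ε' := by
      by_contra h
      push_neg at h
      have : η (s₀ + ε') ≥ η (ηinv x) := by
        rcases h.eq_or_lt with he | hl
        · rw [he]
        · exact (hη_anti (mem_Ioi.2 (by linarith)) (mem_Ioi.2 g1) hl).le
      rw [g2] at this
      linarith
    have hlb : s₀ - ε' < ηinv x := by
      by_contra h
      push_neg at h
      have : η (ηinv x) ≥ η (s₀ - ε') := by
        rcases h.eq_or_lt with he | hl
        · rw [he]
        · exact (hη_anti (mem_Ioi.2 g1) (mem_Ioi.2 (by linarith)) hl).le
      rw [g2] at this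
      linarith
    have : |ηinv x - s₀| < ε' := abs_lt.2 ⟨by linarith, by linarith⟩
    exact lt_trans this hε'ε
  refine ⟨ηinv, fun s hs => hinv_left s hs, ?_⟩
  intro β
  have hβ_def : ∀ s t, β s t = if s = 0 then 0 else ηinv (η s + G t) := fun s t => rfl
  have hβ0 : ∀ t, β 0 t = 0 := fun t => by rw [hβ_def]; simp
  have hβR : ∀ s t : ℝ, 0 < s → 0 ≤ t → η s + G t ∈ R := by
    intro s t hs ht
    obtain ⟨s', h1, _, h3⟩ := hmem s hs (G t) (hGnonneg t ht)
    exact ⟨s', h1, h3⟩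
  have hβpos : ∀ s t : ℝ, 0 < s → 0 ≤ t → 0 < β s t := by
    intro s t hs ht
    rw [hβ_def, if_neg (ne_of_gt hs)]
    exact (hinv_spec _ (hβR s t hs ht)).1
  have hβval : ∀ s t : ℝ, 0 < s → 0 ≤ t → η (β s t) = η s + G t := by
    intro s t hs ht
    rw [hβ_def, if_neg (ne_of_gt hs)]
    exact (hinv_spec _ (hβR s t hs ht)).2
  have hβnonneg : ∀ s t : ℝ, 0 ≤ s → 0 ≤ t → 0 ≤ β s t := by
    intro s t hs ht
    rcases eq_or_lt_of_le hs with h | h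
    · rw [← h, hβ0]
    · exact (hβpos s t h ht).le
  have hβbound : ∀ ε : ℝ, 0 < ε → ∀ s t : ℝ, 0 ≤ s → s < ε → 0 ≤ t → β s t < ε := by
    intro ε hε s t hs hsε ht
    rcases eq_or_lt_of_le hs with h | h
    · rw [← h, hβ0]; exact hε
    · rw [hβ_def, if_neg (ne_of_gt h)]
      apply hinv_small ε hε _ (hβR s t h ht)
      have h1 : η ε < η s := hη_anti (mem_Ioi.2 h) (mem_Ioi.2 hε) hsε
      have h2 : 0 ≤ G t := hGnonneg t ht
      linarith
  -- continuity at interior points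
  have hFcont : ∀ p ∈ (Ioi (0:ℝ)) ×ˢ (Ici (0:ℝ)),
      ContinuousWithinAt (fun p : ℝ × ℝ => β p.1 p.2) ((Ioi 0) ×ˢ (Ici 0)) p := by
    intro p hp
    have hinner : ContinuousWithinAt
        (fun q : ℝ × ℝ => η q.1 + ∫ τ in (0:ℝ)..q.2, gt τ) (Ioi 0 ×ˢ Ici 0) p := by
      apply ContinuousWithinAt.add
      · exact ((hη_contAt _ hp.1).comp continuousAt_fst).continuousWithinAt
      · exact (hGtc.comp continuous_snd).continuousAt.continuousWithinAt
    have hmaps : MapsTo (fun q : ℝ × ℝ => η q.1 + ∫ τ in (0:ℝ)..q.2, gt τ)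
        (Ioi 0 ×ˢ Ici 0) R := by
      intro q hq
      show η q.1 + (∫ τ in (0:ℝ)..q.2, gt τ) ∈ R
      rw [← hGeq q.2 hq.2]
      exact hβR q.1 q.2 hq.1 hq.2
    have hmapsp : η p.1 + (∫ τ in (0:ℝ)..p.2, gt τ) ∈ R := hmaps hp
    have hcomp := ContinuousWithinAt.comp (g := ηinv)
      (f := fun q : ℝ × ℝ => η q.1 + ∫ τ in (0:ℝ)..q.2, gt τ)
      (hinv_cont _ hmapsp) hinner hmaps
    apply hcomp.congr
    · intro q hq
      rw [hβ_def, if_neg (ne_of_gt hq.1), hGeq q.2 hq.2]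
      rfl
    · rw [hβ_def, if_neg (ne_of_gt hp.1), hGeq p.2 hp.2]
      rfl
  have hβcont : ContinuousOn (fun p : ℝ × ℝ => β p.1 p.2) (Ici 0 ×ˢ Ici 0) := by
    intro p hp
    rcases eq_or_lt_of_le (mem_Ici.1 hp.1) with h0 | h0
    · -- boundary point p.1 = 0
      rw [Metric.continuousWithinAt_iff]
      intro ε hε
      refine ⟨ε, hε, ?_⟩
      intro q hq hdist
      have hq1 : q.1 < ε := by
        have h1 : dist q.1 p.1 ≤ dist q p := by
          rw [Prod.dist_eq]; exact le_max_left _ _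
        rw [Real.dist_eq, ← h0, sub_zero] at h1
        exact lt_of_le_of_lt (le_abs_self _) (lt_of_le_of_lt h1 hdist)
      have hβq := hβbound ε hε q.1 q.2 hq.1 hq1 hq.2
      have hβq0 := hβnonneg q.1 q.2 hq.1 hq.2
      have hp0 : β p.1 p.2 = 0 := by rw [← h0, hβ0]
      rw [hp0, Real.dist_eq, sub_zero, abs_of_nonneg hβq0]
      exact hβq
    · -- interior
      apply (hFcont p ⟨h0, hp.2⟩).mono_of_mem_nhdsWithin
      apply mem_nhdsWithin.2
      exact ⟨Ioi 0 ×ˢ univ, (isOpen_Ioi.prod isOpen_univ), ⟨h0, mem_univ _⟩,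
        fun q hq => ⟨hq.1.1, hq.2.2⟩⟩
  have hβmono : ∀ t : ℝ, 0 ≤ t → StrictMonoOn (fun s => β s t) (Ici 0) := by
    intro t ht a ha b hb hab
    simp only
    rcases eq_or_lt_of_le ha.out with h | h
    · rw [← h, hβ0]
      exact hβpos b t (lt_of_le_of_lt (le_of_eq h) hab) ht
    · rw [hβ_def a, if_neg (ne_of_gt h), hβ_def b, if_neg (ne_of_gt (lt_trans h hab))]
      apply hinv_lt _ (hβR b t (lt_trans h hab) ht) _ (hβR a t h ht)
      have := hη_anti (mem_Ioi.2 h) (mem_Ioi.2 (lt_trans h hab)) hab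
      linarith
  refine ⟨⟨hβcont, ?_, ?_⟩, ?_⟩
  · -- ClassK in s for each t
    intro t ht
    refine ⟨?_, hβmono t ht, hβ0 t, fun s hs => hβnonneg s t hs ht⟩
    have hc : Continuous fun s : ℝ => (s, t) := continuous_id.prodMk continuous_const
    have := hβcont.comp hc.continuousOn
      (fun s hs => (mk_mem_prod hs ht : (s, t) ∈ Ici (0:ℝ) ×ˢ Ici 0))
    exact this
  · -- StrictAnti in t and tendsto 0
    intro r hr
    constructor
    · intro a ha b hb hab
      simp only
      rw [hβ_def r a, if_neg (ne_of_gt hr), hβ_def r b, if_neg (ne_of_gt hr)]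
      apply hinv_lt _ (hβR r a hr ha) _ (hβR r b hr hb)
      have := hGmono ha hb hab
      linarith
    · rw [NormedAddCommGroup.tendsto_nhds_zero]
      intro ε hε
      set ε₂ : ℝ := min ε r with hε₂
      have hε₂pos : 0 < ε₂ := lt_min hε hr
      have hε₂r : ε₂ ≤ r := min_le_right _ _
      have hηcmp : η r ≤ η ε₂ := by
        rcases eq_or_lt_of_le hε₂r with h | h
        · rw [h]
        · exact (hη_anti (mem_Ioi.2 hε₂pos) (mem_Ioi.2 hr) h).le
      have hev1 : ∀ᶠ t in atTop, η ε₂ - η r + 1 ≤ G t := hG.eventually_ge_atTop _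
      have hev2 : ∀ᶠ t : ℝ in atTop, 0 ≤ t := eventually_ge_atTop 0
      filter_upwards [hev1, hev2] with t h1 h2
      have hβt := hβpos r t hr h2
      have hsmall : β r t < ε₂ := by
        rw [hβ_def, if_neg (ne_of_gt hr)]
        apply hinv_small ε₂ hε₂pos _ (hβR r t hr h2)
        linarith
      rw [Real.norm_eq_abs, abs_of_pos hβt]
      exact lt_of_lt_of_le hsmall (min_le_left _ _)
  · -- β s 0 = s
    intro s hs
    rcases eq_or_lt_of_le hs with h | h
    · rw [← h, hβ0]
    · rw [hβ_def, if_neg (ne_of_gt h), hG0, add_zero]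
      exact hinv_left s h
end
end

section
/- Let α, g : [0,∞) → [0,∞) be continuous functions such that α(s) > 0 for all s > 0, g(s) > 0 for all s ≥ 0, and ∫₀^s g(τ)dτ → +∞ as s → +∞. Then there exists a function β of class 𝒦𝓛 (depending only on α and g) such that for every T > 0, every y₀ ≥ 0, every continuous v : [0,T] → [0,∞), and every nonnegative absolutely continuous function y on [0,T] satisfying y(0) = y₀ and y′(t) ≤ −g(t)·α(max{y(t) + v(t), 0}) for almost every t ∈ [0,T], one has y(t) ≤ max{β(y₀, t), max_{s∈[0,t]} v(s)} for all t ∈ [0,T]. -/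
open Set MeasureTheory Filter

noncomputable section

/-- Running infimum of `f` over `[a, max x a]`. -/
def runInf (f : ℝ → ℝ) (a x : ℝ) : ℝ := sInf (f '' Icc a (max x a))

variable {f : ℝ → ℝ} {a : ℝ}

lemma runInf_bddBelow (hf : ContinuousOn f (Ici a)) (x : ℝ) :
    BddBelow (f '' Icc a (max x a)) :=
  ((isCompact_Icc.image_of_continuousOn (hf.mono (Icc_subset_Ici_self))).bddBelow)

lemma runInf_le (hf : ContinuousOn f (Ici a)) {x u : ℝ} (hu : u ∈ Icc a (max x a)) :
    runInf f a x ≤ f u :=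
  csInf_le (runInf_bddBelow hf x) (mem_image_of_mem f hu)

lemma runInf_exists_min (hf : ContinuousOn f (Ici a)) (x : ℝ) :
    ∃ ξ ∈ Icc a (max x a), runInf f a x = f ξ ∧ ∀ u ∈ Icc a (max x a), f ξ ≤ f u := by
  obtain ⟨ξ, hξ, hmin⟩ := isCompact_Icc.exists_isMinOn (f := f)
    ⟨a, le_rfl, le_max_right x a⟩ (hf.mono Icc_subset_Ici_self)
  refine ⟨ξ, hξ, le_antisymm (runInf_le hf hξ) ?_, fun u hu => hmin hu⟩
  have hne : (Icc a (max x a)).Nonempty := ⟨a, le_rfl, le_max_right x a⟩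
  apply le_csInf (hne.image f)
  rintro b ⟨u, hu, rfl⟩; exact hmin hu

lemma runInf_antitone (hf : ContinuousOn f (Ici a)) : Antitone (runInf f a) := by
  intro x y hxy
  apply le_csInf ((nonempty_Icc.2 (le_max_right x a)).image f)
  rintro b ⟨u, hu, rfl⟩
  exact runInf_le hf ⟨hu.1, hu.2.trans (max_le_max hxy le_rfl)⟩

lemma runInf_pos (hf : ContinuousOn f (Ici a)) {x : ℝ}
    (hpos : ∀ u ∈ Icc a (max x a), 0 < f u) : 0 < runInf f a x := by
  obtain ⟨ξ, hξ, he, -⟩ := runInf_exists_min hf x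
  rw [he]; exact hpos ξ hξ

lemma runInf_nonneg (hf : ContinuousOn f (Ici a)) {x : ℝ}
    (hn : ∀ u ∈ Ici a, 0 ≤ f u) : 0 ≤ runInf f a x := by
  obtain ⟨ξ, hξ, he, -⟩ := runInf_exists_min hf x
  rw [he]; exact hn ξ hξ.1

private lemma max_sub_max_le {x x₀ a : ℝ} (h : x ≤ x₀) :
    max x₀ a ≤ max x a + (x₀ - x) := by
  rcases le_total x₀ a with h' | h'
  · rw [max_eq_right h']; linarith [le_max_right x a]
  · rw [max_eq_left h']; linarith [le_max_left x a]

lemma runInf_continuous (hf : ContinuousOn f (Ici a)) : Continuous (runInf f a) := by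
  rw [Metric.continuous_iff]
  intro x₀ ε hε
  have hK : IsCompact (Icc a (max x₀ a + 1)) := isCompact_Icc
  have hUC := hK.uniformContinuousOn_of_continuous (hf.mono (Icc_subset_Ici_self))
  rw [Metric.uniformContinuousOn_iff] at hUC
  obtain ⟨δ₀, hδ₀, hUCd⟩ := hUC ε hε
  refine ⟨min δ₀ 1, by positivity, fun x hx => ?_⟩
  have hxd : |x - x₀| < min δ₀ 1 := by rwa [Real.dist_eq] at hx
  have hxd₀ : |x - x₀| < δ₀ := lt_of_lt_of_le hxd (min_le_left _ _)
  have hxd₁ : |x - x₀| < 1 := lt_of_lt_of_le hxd (min_le_right _ _)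
  have habs1 : x₀ - x ≤ |x - x₀| := by rw [abs_sub_comm]; exact le_abs_self _
  have habs2 : x - x₀ ≤ |x - x₀| := le_abs_self _
  rw [Real.dist_eq]
  rcases le_total x x₀ with hle | hle
  · have h1 : runInf f a x₀ ≤ runInf f a x := runInf_antitone hf hle
    have hmm := max_sub_max_le (a := a) hle
    have h2 : runInf f a x < runInf f a x₀ + ε := by
      obtain ⟨ξ, hξ, he, -⟩ := runInf_exists_min hf x₀
      rcases le_or_gt ξ (max x a) with hc | hc
      · have := runInf_le hf (x := x) ⟨hξ.1, hc⟩
        rw [← he] at this; linarith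
      · have hp : max x a ∈ Icc a (max x₀ a + 1) :=
          ⟨le_max_right _ _, by linarith [max_le_max hle (le_refl a)]⟩
        have hξK : ξ ∈ Icc a (max x₀ a + 1) := ⟨hξ.1, by linarith [hξ.2]⟩
        have hdist : dist (max x a) ξ < δ₀ := by
          rw [Real.dist_eq, abs_sub_lt_iff]
          have hξ2 : ξ ≤ max x₀ a := hξ.2
          constructor <;> linarith
        have hfc := lt_of_abs_lt (hUCd (max x a) hp ξ hξK hdist)
        have h3 : runInf f a x ≤ f (max x a) :=
          runInf_le hf ⟨le_max_right _ _, le_rfl⟩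
        rw [he]; linarith
    rw [abs_sub_lt_iff]; constructor <;> linarith
  · have h1 : runInf f a x ≤ runInf f a x₀ := runInf_antitone hf hle
    have hmm := max_sub_max_le (a := a) hle
    have h2 : runInf f a x₀ < runInf f a x + ε := by
      obtain ⟨ξ, hξ, he, -⟩ := runInf_exists_min hf x
      rcases le_or_gt ξ (max x₀ a) with hc | hc
      · have := runInf_le hf (x := x₀) ⟨hξ.1, hc⟩
        rw [← he] at this; linarith
      · have hξ2 : ξ ≤ max x a := hξ.2
        have hξK : ξ ∈ Icc a (max x₀ a + 1) := ⟨hξ.1, by linarith⟩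
        have hpK : max x₀ a ∈ Icc a (max x₀ a + 1) := ⟨le_max_right _ _, by linarith⟩
        have hdist : dist ξ (max x₀ a) < δ₀ := by
          rw [Real.dist_eq, abs_sub_lt_iff]
          constructor <;> linarith
        have hfc' := hUCd ξ hξK (max x₀ a) hpK hdist
        rw [Real.dist_eq, abs_sub_comm] at hfc'
        have hfc := lt_of_abs_lt hfc'
        have h3 : runInf f a x₀ ≤ f (max x₀ a) :=
          runInf_le hf ⟨le_max_right _ _, le_rfl⟩
        rw [he]; linarith
    rw [abs_sub_lt_iff]; constructor <;> linarith

/-! ### Envelope functions -/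

def Mfun (α : ℝ → ℝ) (x : ℝ) : ℝ := runInf (fun u => α (max (1 - u) 0)) 0 x

def mfun (α : ℝ → ℝ) (ε : ℝ) : ℝ := min (max ε 0) (Mfun α (1 - ε))

def cfun (α : ℝ → ℝ) (r : ℝ) : ℝ := runInf α 1 (2 * r) / α 1

def Gfun (g : ℝ → ℝ) (t : ℝ) : ℝ := ∫ τ in (0:ℝ)..t, g (max τ 0)

variable {α g : ℝ → ℝ}

lemma refl_cont (hαc : ContinuousOn α (Ici 0)) :
    ContinuousOn (fun u => α (max (1 - u) 0)) (Ici (0:ℝ)) := by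
  have hm : Continuous (fun u : ℝ => max (1 - u) 0) :=
    (continuous_const.sub continuous_id).max continuous_const
  exact hαc.comp hm.continuousOn (fun u _ => mem_Ici.2 (le_max_right _ _))

lemma hαc1 (hαc : ContinuousOn α (Ici 0)) : ContinuousOn α (Ici (1:ℝ)) :=
  hαc.mono (Ici_subset_Ici.2 zero_le_one)

lemma Mfun_nonneg (hαc : ContinuousOn α (Ici 0)) (hαnn : ∀ s ∈ Ici (0:ℝ), 0 ≤ α s)
    (x : ℝ) : 0 ≤ Mfun α x :=
  runInf_nonneg (refl_cont hαc) (fun u _ => hαnn _ (mem_Ici.2 (le_max_right _ _)))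

lemma mfun_monotone (hαc : ContinuousOn α (Ici 0)) : Monotone (mfun α) := by
  intro x y hxy
  exact min_le_min (max_le_max hxy le_rfl)
    (runInf_antitone (refl_cont hαc) (by linarith))

lemma mfun_continuous (hαc : ContinuousOn α (Ici 0)) : Continuous (mfun α) := by
  apply Continuous.min (continuous_id.max continuous_const)
  exact (runInf_continuous (refl_cont hαc)).comp (by fun_prop)

lemma mfun_nonneg (hαc : ContinuousOn α (Ici 0)) (hαnn : ∀ s ∈ Ici (0:ℝ), 0 ≤ α s)
    (ε : ℝ) : 0 ≤ mfun α ε :=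
  le_min (le_max_right _ _) (Mfun_nonneg hαc hαnn _)

lemma mfun_zero (hαc : ContinuousOn α (Ici 0)) (hαnn : ∀ s ∈ Ici (0:ℝ), 0 ≤ α s) :
    mfun α 0 = 0 := by
  have h := Mfun_nonneg hαc hαnn 1
  rw [mfun]
  norm_num
  exact h

lemma mfun_le (ε : ℝ) : mfun α ε ≤ max ε 0 := min_le_left _ _

lemma mfun_pos (hαc : ContinuousOn α (Ici 0)) (hαpos : ∀ s > (0:ℝ), 0 < α s)
    {ε : ℝ} (hε : 0 < ε) : 0 < mfun α ε := by
  apply lt_min (lt_max_of_lt_left hε)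
  apply runInf_pos (refl_cont hαc)
  intro u hu
  have hu1 : u < 1 := by
    rcases le_total (1 - ε) 0 with h | h
    · have : max (1 - ε) 0 = 0 := max_eq_right h
      rw [this] at hu; have := hu.2; linarith
    · have : max (1 - ε) 0 = 1 - ε := max_eq_left h
      rw [this] at hu; have := hu.2; linarith
  have : max (1 - u) 0 = 1 - u := max_eq_left (by linarith)
  rw [this]; exact hαpos _ (by linarith)

lemma mfun_le_alpha_one (hαc : ContinuousOn α (Ici 0)) (ε : ℝ) : mfun α ε ≤ α 1 := by
  refine (min_le_right _ _).trans ?_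
  have h0 : (0:ℝ) ∈ Icc 0 (max (1 - ε) 0) := ⟨le_rfl, le_max_right _ _⟩
  have := runInf_le (refl_cont hαc) h0
  simpa [Mfun] using this

lemma cfun_continuous (hαc : ContinuousOn α (Ici 0)) : Continuous (cfun α) :=
  ((runInf_continuous (hαc1 hαc)).comp (by fun_prop)).div_const _

lemma cfun_antitone (hαc : ContinuousOn α (Ici 0)) (hαpos : ∀ s > (0:ℝ), 0 < α s) :
    Antitone (cfun α) := by
  intro r₁ r₂ h
  have h := runInf_antitone (hαc1 hαc) (by linarith : 2 * r₁ ≤ 2 * r₂)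
  exact div_le_div_of_nonneg_right h (hαpos 1 one_pos).le

lemma cfun_pos (hαc : ContinuousOn α (Ici 0)) (hαpos : ∀ s > (0:ℝ), 0 < α s) (r : ℝ) :
    0 < cfun α r := by
  apply div_pos _ (hαpos 1 one_pos)
  exact runInf_pos (hαc1 hαc) (fun u hu => hαpos u (lt_of_lt_of_le one_pos hu.1))

lemma cfun_le_one (hαc : ContinuousOn α (Ici 0)) (hαpos : ∀ s > (0:ℝ), 0 < α s) (r : ℝ) :
    cfun α r ≤ 1 := by
  rw [cfun, div_le_one (hαpos 1 one_pos)]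
  exact runInf_le (hαc1 hαc) ⟨le_rfl, le_max_right _ _⟩

/-- Key envelope inequality. -/
lemma envelope (hαc : ContinuousOn α (Ici 0)) (hαnn : ∀ s ∈ Ici (0:ℝ), 0 ≤ α s)
    (hαpos : ∀ s > (0:ℝ), 0 < α s) {ε σ r : ℝ}
    (hε : 0 < ε) (hεσ : ε ≤ σ) (hσr : σ ≤ 2 * r) :
    mfun α ε * cfun α r ≤ α σ := by
  have hσ0 : 0 < σ := lt_of_lt_of_le hε hεσ
  rcases le_or_gt σ 1 with hσ1 | hσ1
  · have h1 : mfun α ε ≤ α σ := by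
      refine (min_le_right _ _).trans ?_
      have hu : (1 - σ) ∈ Icc 0 (max (1 - ε) 0) :=
        ⟨by linarith, le_max_of_le_left (by linarith)⟩
      have := runInf_le (refl_cont hαc) hu
      simpa [Mfun, max_eq_left hσ0.le, show (1:ℝ) - (1 - σ) = σ by ring] using this
    calc mfun α ε * cfun α r ≤ α σ * 1 :=
          mul_le_mul h1 (cfun_le_one hαc hαpos r) (cfun_pos hαc hαpos r).le
            (hαnn σ hσ0.le)
      _ = α σ := mul_one _
  · have hN : runInf α 1 (2 * r) ≤ α σ :=
      runInf_le (hαc1 hαc) ⟨hσ1.le, le_max_of_le_left hσr⟩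
    have hα1 : (0:ℝ) < α 1 := hαpos 1 one_pos
    calc mfun α ε * cfun α r ≤ α 1 * cfun α r :=
          mul_le_mul_of_nonneg_right (mfun_le_alpha_one hαc ε) (cfun_pos hαc hαpos r).le
      _ = runInf α 1 (2 * r) := by rw [cfun]; field_simp
      _ ≤ α σ := hN

/-! ### The primitive G -/

lemma gball_cont (hgc : ContinuousOn g (Ici 0)) :
    Continuous (fun τ => g (max τ 0)) :=
  hgc.comp_continuous (by fun_prop) (fun x => mem_Ici.2 (le_max_right _ _))

lemma Gfun_continuous (hgc : ContinuousOn g (Ici 0)) : Continuous (Gfun g) :=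
  intervalIntegral.continuous_primitive
    (fun a b => ((gball_cont hgc).intervalIntegrable a b)) 0

lemma Gfun_zero : Gfun g 0 = 0 := intervalIntegral.integral_same

lemma Gfun_nonneg (hgpos : ∀ s ∈ Ici (0:ℝ), 0 < g s) {t : ℝ} (ht : 0 ≤ t) :
    0 ≤ Gfun g t :=
  intervalIntegral.integral_nonneg ht
    (fun u _ => (hgpos _ (mem_Ici.2 (le_max_right _ _))).le)

lemma Gfun_strictMono (hgc : ContinuousOn g (Ici 0)) (hgpos : ∀ s ∈ Ici (0:ℝ), 0 < g s) :
    StrictMono (Gfun g) := by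
  intro t₁ t₂ h
  have hint : ∀ a b : ℝ, IntervalIntegrable (fun τ => g (max τ 0)) volume a b :=
    fun a b => (gball_cont hgc).intervalIntegrable a b
  have hsplit : Gfun g t₁ + ∫ τ in t₁..t₂, g (max τ 0) = Gfun g t₂ :=
    intervalIntegral.integral_add_adjacent_intervals (hint 0 t₁) (hint t₁ t₂)
  have hpos : 0 < ∫ τ in t₁..t₂, g (max τ 0) :=
    intervalIntegral.intervalIntegral_pos_of_pos_on (hint t₁ t₂)
      (fun x _ => hgpos _ (mem_Ici.2 (le_max_right _ _))) h
  linarith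

lemma Gfun_eq (hgc : ContinuousOn g (Ici 0)) {t : ℝ} (ht : 0 ≤ t) :
    Gfun g t = ∫ τ in (0:ℝ)..t, g τ := by
  apply intervalIntegral.integral_congr
  intro τ hτ
  rw [uIcc_of_le ht] at hτ
  simp [max_eq_left hτ.1]

lemma Gfun_tendsto (hgc : ContinuousOn g (Ici 0))
    (hG : Tendsto (fun s => ∫ τ in (0:ℝ)..s, g τ) atTop atTop) :
    Tendsto (Gfun g) atTop atTop := by
  apply hG.congr'
  filter_upwards [eventually_ge_atTop (0:ℝ)] with t ht
  exact (Gfun_eq hgc ht).symm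

/-! ### The KL function β -/

def Sset (α g : ℝ → ℝ) (r t : ℝ) : Set ℝ :=
  {ε | 0 ≤ ε ∧ ε ≤ r ∧ ε + mfun α ε * (cfun α r * Gfun g t) ≤ r}

def betaFun (α g : ℝ → ℝ) (r t : ℝ) : ℝ := sSup (Sset α g r t)

variable {α g : ℝ → ℝ}

lemma zero_mem_Sset (hαc : ContinuousOn α (Ici 0)) (hαnn : ∀ s ∈ Ici (0:ℝ), 0 ≤ α s)
    {r t : ℝ} (hr : 0 ≤ r) : (0:ℝ) ∈ Sset α g r t := by
  refine ⟨le_rfl, hr, ?_⟩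
  rw [mfun_zero hαc hαnn]; simpa using hr

lemma Sset_bddAbove (r t : ℝ) : BddAbove (Sset α g r t) :=
  ⟨r, fun x hx => hx.2.1⟩

lemma mem_le_beta {r t x : ℝ} (hx : x ∈ Sset α g r t) : x ≤ betaFun α g r t :=
  le_csSup (Sset_bddAbove r t) hx

lemma beta_nonneg (hαc : ContinuousOn α (Ici 0)) (hαnn : ∀ s ∈ Ici (0:ℝ), 0 ≤ α s)
    {r t : ℝ} (hr : 0 ≤ r) : 0 ≤ betaFun α g r t :=
  mem_le_beta (zero_mem_Sset hαc hαnn hr)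

lemma beta_le_r {r t : ℝ} (hr : 0 ≤ r) : betaFun α g r t ≤ r :=
  Real.sSup_le (fun x hx => hx.2.1) hr

lemma phi_strictMono (hαc : ContinuousOn α (Ici 0)) {K : ℝ} (hK : 0 ≤ K) :
    StrictMono (fun ε => ε + mfun α ε * K) :=
  strictMono_id.add_monotone ((mfun_monotone hαc).mul_const hK)

lemma beta_le_of_phi_ge (hαc : ContinuousOn α (Ici 0)) (hαpos : ∀ s > (0:ℝ), 0 < α s)
    (hgpos : ∀ s ∈ Ici (0:ℝ), 0 < g s)
    {r t x : ℝ} (ht : 0 ≤ t) (hx0 : 0 ≤ x)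
    (hx : r ≤ x + mfun α x * (cfun α r * Gfun g t)) :
    betaFun α g r t ≤ x := by
  have hK : 0 ≤ cfun α r * Gfun g t :=
    mul_nonneg (cfun_pos hαc hαpos r).le (Gfun_nonneg hgpos ht)
  apply Real.sSup_le _ hx0
  intro s hs
  by_contra hcon
  push_neg at hcon
  have := (phi_strictMono hαc hK) hcon
  simp only at this
  have h2 := hs.2.2
  linarith

lemma beta_mem (hαc : ContinuousOn α (Ici 0)) (hαnn : ∀ s ∈ Ici (0:ℝ), 0 ≤ α s)
    {r t : ℝ} (hr : 0 ≤ r) : betaFun α g r t ∈ Sset α g r t := by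
  have hclosed : IsClosed (Sset α g r t) := by
    have : Sset α g r t = (Ici 0 ∩ Iic r) ∩
        (fun ε => ε + mfun α ε * (cfun α r * Gfun g t)) ⁻¹' (Iic r) := by
      ext x; simp [Sset, and_assoc]
    rw [this]
    exact (isClosed_Ici.inter isClosed_Iic).inter
      (IsClosed.preimage (continuous_id.add ((mfun_continuous hαc).mul continuous_const))
        isClosed_Iic)
  exact hclosed.csSup_mem ⟨0, zero_mem_Sset hαc hαnn hr⟩ (Sset_bddAbove r t)

lemma beta_pos (hαc : ContinuousOn α (Ici 0)) (hαpos : ∀ s > (0:ℝ), 0 < α s)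
    (hgpos : ∀ s ∈ Ici (0:ℝ), 0 < g s)
    {r t : ℝ} (hr : 0 < r) (ht : 0 ≤ t) : 0 < betaFun α g r t := by
  set G := Gfun g t with hGdef
  have hGnn : 0 ≤ G := Gfun_nonneg hgpos ht
  have h1G : (0:ℝ) < 1 + G := by linarith
  set e := r / (1 + G) with hedef
  have he : 0 < e := div_pos hr h1G
  have hmem : e ∈ Sset α g r t := by
    refine ⟨he.le, div_le_self hr.le (by linarith), ?_⟩
    have hme : mfun α e ≤ e := (mfun_le e).trans_eq (max_eq_left he.le)
    have hc1 : cfun α r ≤ 1 := cfun_le_one hαc hαpos r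
    have hcnn : 0 ≤ cfun α r := (cfun_pos hαc hαpos r).le
    have : mfun α e * (cfun α r * G) ≤ e * G := by
      have h2 : cfun α r * G ≤ G := by nlinarith
      have h3 : 0 ≤ cfun α r * G := mul_nonneg hcnn hGnn
      exact mul_le_mul hme h2 h3 he.le
    have heq : e + e * G = r := by
      have h := div_mul_cancel₀ r h1G.ne'; rw [hedef]; linarith [h]
    linarith
  exact lt_of_lt_of_le he (mem_le_beta hmem)

lemma beta_zero (hαc : ContinuousOn α (Ici 0)) (hαnn : ∀ s ∈ Ici (0:ℝ), 0 ≤ α s)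
    (t : ℝ) : betaFun α g 0 t = 0 :=
  le_antisymm (beta_le_r le_rfl) (beta_nonneg hαc hαnn le_rfl)

lemma phi_beta_eq (hαc : ContinuousOn α (Ici 0)) (hαnn : ∀ s ∈ Ici (0:ℝ), 0 ≤ α s)
    (hαpos : ∀ s > (0:ℝ), 0 < α s) (hgpos : ∀ s ∈ Ici (0:ℝ), 0 < g s)
    {r t : ℝ} (hr : 0 < r) (ht : 0 ≤ t) :
    betaFun α g r t + mfun α (betaFun α g r t) * (cfun α r * Gfun g t) = r := by
  set K := cfun α r * Gfun g t with hKdef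
  have hKnn : 0 ≤ K :=
    mul_nonneg (cfun_pos hαc hαpos r).le (Gfun_nonneg hgpos ht)
  set b := betaFun α g r t with hbdef
  have hmem := beta_mem (g := g) hαc hαnn hr.le (t := t)
  have hle : b + mfun α b * K ≤ r := hmem.2.2
  by_contra hne
  have hlt : b + mfun α b * K < r := lt_of_le_of_ne hle hne
  have hbnn : 0 ≤ b := hmem.1
  have hbr : b < r := by
    have : 0 ≤ mfun α b * K := mul_nonneg (mfun_nonneg hαc hαnn b) hKnn
    linarith
  have hcont : ContinuousAt (fun ε => ε + mfun α ε * K) b :=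
    (continuous_id.add ((mfun_continuous hαc).mul continuous_const)).continuousAt
  have hev : ∀ᶠ x in nhds b, x + mfun α x * K < r :=
    hcont.eventually_lt continuousAt_const hlt
  obtain ⟨δ, hδ, hball⟩ := Metric.eventually_nhds_iff.1 hev
  set x := min (b + δ / 2) r with hxdef
  have hxb : b < x := lt_min (by linarith) hbr
  have hxr : x ≤ r := min_le_right _ _
  have hxd : dist x b < δ := by
    rw [Real.dist_eq, abs_lt]
    constructor
    · have : b ≤ x := hxb.le; linarith
    · have : x ≤ b + δ / 2 := min_le_left _ _; linarith
  have hxS : x ∈ Sset α g r t := ⟨hbnn.trans hxb.le, hxr, (hball hxd).le⟩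
  exact absurd (mem_le_beta hxS) (not_le.2 hxb)

lemma beta_strictMonoOn (hαc : ContinuousOn α (Ici 0)) (hαnn : ∀ s ∈ Ici (0:ℝ), 0 ≤ α s)
    (hαpos : ∀ s > (0:ℝ), 0 < α s) (hgpos : ∀ s ∈ Ici (0:ℝ), 0 < g s)
    {t : ℝ} (ht : 0 ≤ t) :
    StrictMonoOn (fun r => betaFun α g r t) (Ici 0) := by
  intro r₁ hr₁ r₂ hr₂ h12
  have hr₂pos : 0 < r₂ := lt_of_le_of_lt hr₁ h12
  rcases eq_or_lt_of_le (show (0:ℝ) ≤ r₁ from hr₁) with h | hr₁pos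
  · simp only
    rw [← h, beta_zero hαc hαnn]
    exact beta_pos hαc hαpos hgpos hr₂pos ht
  · simp only
    have hGnn : 0 ≤ Gfun g t := Gfun_nonneg hgpos ht
    have hmem₁ := beta_mem (g := g) hαc hαnn hr₁pos.le (t := t)
    have hroot₂ := phi_beta_eq hαc hαnn hαpos hgpos hr₂pos ht
    have hKnn : 0 ≤ cfun α r₂ * Gfun g t :=
      mul_nonneg (cfun_pos hαc hαpos r₂).le hGnn
    have hkey : betaFun α g r₁ t + mfun α (betaFun α g r₁ t) * (cfun α r₂ * Gfun g t)
        < r₂ := by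
      have hc : cfun α r₂ ≤ cfun α r₁ := cfun_antitone hαc hαpos h12.le
      have hmnn : 0 ≤ mfun α (betaFun α g r₁ t) := mfun_nonneg hαc hαnn _
      have h1 : mfun α (betaFun α g r₁ t) * (cfun α r₂ * Gfun g t) ≤
          mfun α (betaFun α g r₁ t) * (cfun α r₁ * Gfun g t) :=
        mul_le_mul_of_nonneg_left (mul_le_mul_of_nonneg_right hc hGnn) hmnn
      have h2 := hmem₁.2.2
      linarith
    apply ((phi_strictMono hαc hKnn).lt_iff_lt).1
    show betaFun α g r₁ t + mfun α (betaFun α g r₁ t) * (cfun α r₂ * Gfun g t) <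
      betaFun α g r₂ t + mfun α (betaFun α g r₂ t) * (cfun α r₂ * Gfun g t)
    rw [hroot₂]
    exact hkey

lemma beta_strictAntiOn (hαc : ContinuousOn α (Ici 0)) (hαnn : ∀ s ∈ Ici (0:ℝ), 0 ≤ α s)
    (hαpos : ∀ s > (0:ℝ), 0 < α s) (hgc : ContinuousOn g (Ici 0))
    (hgpos : ∀ s ∈ Ici (0:ℝ), 0 < g s) {r : ℝ} (hr : 0 < r) :
    StrictAntiOn (fun t => betaFun α g r t) (Ici 0) := by
  intro t₁ ht₁ t₂ ht₂ h12
  simp only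
  have hroot₁ := phi_beta_eq hαc hαnn hαpos hgpos hr ht₁
  have hroot₂ := phi_beta_eq hαc hαnn hαpos hgpos hr ht₂
  have hb₁pos : 0 < betaFun α g r t₁ := beta_pos hαc hαpos hgpos hr ht₁
  have hG : Gfun g t₁ < Gfun g t₂ := Gfun_strictMono hgc hgpos h12
  have hcpos : 0 < cfun α r := cfun_pos hαc hαpos r
  have hmpos : 0 < mfun α (betaFun α g r t₁) := mfun_pos hαc hαpos hb₁pos
  have hKnn : 0 ≤ cfun α r * Gfun g t₂ :=
    mul_nonneg hcpos.le (Gfun_nonneg hgpos ht₂)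
  have hkey : betaFun α g r t₂ + mfun α (betaFun α g r t₂) * (cfun α r * Gfun g t₂) <
      betaFun α g r t₁ + mfun α (betaFun α g r t₁) * (cfun α r * Gfun g t₂) := by
    have h2 : mfun α (betaFun α g r t₁) * (cfun α r * Gfun g t₁) <
        mfun α (betaFun α g r t₁) * (cfun α r * Gfun g t₂) :=
      mul_lt_mul_of_pos_left (mul_lt_mul_of_pos_left hG hcpos) hmpos
    linarith
  exact ((phi_strictMono hαc hKnn).lt_iff_lt).1 hkey

lemma beta_tendsto (hαc : ContinuousOn α (Ici 0)) (hαnn : ∀ s ∈ Ici (0:ℝ), 0 ≤ α s)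
    (hαpos : ∀ s > (0:ℝ), 0 < α s) (hgc : ContinuousOn g (Ici 0))
    (hgpos : ∀ s ∈ Ici (0:ℝ), 0 < g s)
    (hG : Tendsto (fun s => ∫ τ in (0:ℝ)..s, g τ) atTop atTop)
    {r : ℝ} (hr : 0 < r) :
    Tendsto (fun t => betaFun α g r t) atTop (nhds 0) := by
  rw [tendsto_order]
  constructor
  · intro a ha
    filter_upwards [eventually_ge_atTop (0:ℝ)] with t ht
    exact lt_of_lt_of_le ha (beta_nonneg hαc hαnn hr.le)
  · intro a ha
    set ε := min (a / 2) (r / 2) with hεdef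
    have hεpos : 0 < ε := lt_min (by linarith) (by linarith)
    have hεa : ε < a := lt_of_le_of_lt (min_le_left _ _) (by linarith)
    have hmpos : 0 < mfun α ε := mfun_pos hαc hαpos hεpos
    have hcpos : 0 < cfun α r := cfun_pos hαc hαpos r
    have hmc : 0 < mfun α ε * cfun α r := mul_pos hmpos hcpos
    have hGt := Gfun_tendsto hgc hG
    filter_upwards [hGt.eventually_ge_atTop ((r - ε) / (mfun α ε * cfun α r)),
      eventually_ge_atTop (0:ℝ)] with t hGe ht
    have hphi : r ≤ ε + mfun α ε * (cfun α r * Gfun g t) := by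
      have := (div_le_iff₀ hmc).1 hGe
      nlinarith
    exact lt_of_le_of_lt (beta_le_of_phi_ge hαc hαpos hgpos ht hεpos.le hphi) hεa

lemma beta_continuousOn (hαc : ContinuousOn α (Ici 0)) (hαnn : ∀ s ∈ Ici (0:ℝ), 0 ≤ α s)
    (hαpos : ∀ s > (0:ℝ), 0 < α s) (hgc : ContinuousOn g (Ici 0))
    (hgpos : ∀ s ∈ Ici (0:ℝ), 0 < g s) :
    ContinuousOn (fun p : ℝ × ℝ => betaFun α g p.1 p.2) (Ici 0 ×ˢ Ici 0) := by
  intro p₀ hp₀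
  obtain ⟨hr₀, ht₀⟩ := hp₀
  simp only [mem_Ici] at hr₀ ht₀
  set r₀ := p₀.1 with hr₀def
  set t₀ := p₀.2 with ht₀def
  rcases eq_or_lt_of_le hr₀ with h0 | hr₀pos
  · -- r₀ = 0 : squeeze 0 ≤ β ≤ r
    have hβ0 : betaFun α g r₀ t₀ = 0 := by rw [← h0]; exact beta_zero hαc hαnn t₀
    rw [ContinuousWithinAt, hβ0]
    have hfst : Tendsto (fun p : ℝ × ℝ => p.1)
        (nhdsWithin p₀ (Ici 0 ×ˢ Ici 0)) (nhds 0) := by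
      have := (continuous_fst.tendsto p₀).mono_left
        (nhdsWithin_le_nhds (s := Ici 0 ×ˢ Ici (0:ℝ)))
      rwa [← hr₀def, ← h0] at this
    apply tendsto_of_tendsto_of_tendsto_of_le_of_le' tendsto_const_nhds hfst
    · filter_upwards [self_mem_nhdsWithin] with p hp
      exact beta_nonneg hαc hαnn hp.1
    · filter_upwards [self_mem_nhdsWithin] with p hp
      exact beta_le_r hp.1
  · -- r₀ > 0
    have hb₀pos : 0 < betaFun α g r₀ t₀ := beta_pos hαc hαpos hgpos hr₀pos ht₀
    have hb₀r : betaFun α g r₀ t₀ ≤ r₀ := beta_le_r hr₀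
    have hroot₀ := phi_beta_eq hαc hαnn hαpos hgpos hr₀pos ht₀
    rw [ContinuousWithinAt]
    rw [tendsto_order]
    constructor
    · -- lower bound: a < β p eventually
      intro a ha
      rcases lt_or_ge a 0 with ha0 | ha0
      · filter_upwards [self_mem_nhdsWithin] with p hp
        exact lt_of_lt_of_le ha0 (beta_nonneg hαc hαnn hp.1)
      · set δ := (betaFun α g r₀ t₀ - a) / 2 with hδdef
        have hδpos : 0 < δ := by simp only [hδdef]; linarith
        set x := betaFun α g r₀ t₀ - δ with hxdef
        have hxa : a < x := by simp only [hxdef, hδdef]; linarith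
        have hx0 : 0 < x := by simp only [hxdef]; linarith
        have hmx : mfun α x ≤ mfun α (betaFun α g r₀ t₀) :=
          mfun_monotone hαc (by simp only [hxdef]; linarith)
        have hKnn₀ : 0 ≤ cfun α r₀ * Gfun g t₀ :=
          mul_nonneg (cfun_pos hαc hαpos r₀).le (Gfun_nonneg hgpos ht₀)
        have hval : x + mfun α x * (cfun α r₀ * Gfun g t₀) ≤ r₀ - δ := by
          have := mul_le_mul_of_nonneg_right hmx hKnn₀
          simp only [hxdef]
          linarith
        -- the continuous function p ↦ p.1 - (x + m x * (c p.1 * G p.2))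
        have hFc : Continuous (fun p : ℝ × ℝ =>
            p.1 - (x + mfun α x * (cfun α (p.1) * Gfun g (p.2)))) := by
          apply continuous_fst.sub
          apply continuous_const.add
          apply continuous_const.mul
          exact ((cfun_continuous hαc).comp continuous_fst).mul
            ((Gfun_continuous hgc).comp continuous_snd)
        have hF₀ : 0 < p₀.1 - (x + mfun α x * (cfun α p₀.1 * Gfun g p₀.2)) := by
          rw [← hr₀def, ← ht₀def]; linarith
        have hev : ∀ᶠ p in nhds p₀,
            0 < p.1 - (x + mfun α x * (cfun α p.1 * Gfun g p.2)) :=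
          (hFc.tendsto p₀).eventually (eventually_gt_nhds hF₀)
        filter_upwards [hev.filter_mono nhdsWithin_le_nhds, self_mem_nhdsWithin]
          with p hp hpS
        have hprod : 0 ≤ mfun α x * (cfun α p.1 * Gfun g p.2) :=
          mul_nonneg (mfun_nonneg hαc hαnn x)
            (mul_nonneg (cfun_pos hαc hαpos p.1).le (Gfun_nonneg hgpos hpS.2))
        have hxS : x ∈ Sset α g p.1 p.2 := ⟨hx0.le, by linarith, by linarith⟩
        exact lt_of_lt_of_le hxa (mem_le_beta hxS)
    · -- upper bound: β p < b eventually
      intro b hb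
      set δ := (b - betaFun α g r₀ t₀) / 2 with hδdef
      have hδpos : 0 < δ := by simp only [hδdef]; linarith
      set x := betaFun α g r₀ t₀ + δ with hxdef
      have hxb : x < b := by simp only [hxdef, hδdef]; linarith
      have hx0 : 0 ≤ x := by simp only [hxdef]; linarith
      have hmx : mfun α (betaFun α g r₀ t₀) ≤ mfun α x :=
        mfun_monotone hαc (by simp only [hxdef]; linarith)
      have hKnn₀ : 0 ≤ cfun α r₀ * Gfun g t₀ :=
        mul_nonneg (cfun_pos hαc hαpos r₀).le (Gfun_nonneg hgpos ht₀)
      have hval : r₀ + δ ≤ x + mfun α x * (cfun α r₀ * Gfun g t₀) := by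
        have := mul_le_mul_of_nonneg_right hmx hKnn₀
        simp only [hxdef]
        linarith
      have hFc : Continuous (fun p : ℝ × ℝ =>
          (x + mfun α x * (cfun α (p.1) * Gfun g (p.2))) - p.1) := by
        apply Continuous.sub _ continuous_fst
        apply continuous_const.add
        apply continuous_const.mul
        exact ((cfun_continuous hαc).comp continuous_fst).mul
          ((Gfun_continuous hgc).comp continuous_snd)
      have hF₀ : 0 < (x + mfun α x * (cfun α p₀.1 * Gfun g p₀.2)) - p₀.1 := by
        rw [← hr₀def, ← ht₀def]; linarith
      have hev : ∀ᶠ p in nhds p₀,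
          0 < (x + mfun α x * (cfun α p.1 * Gfun g p.2)) - p.1 :=
        (hFc.tendsto p₀).eventually (eventually_gt_nhds hF₀)
      filter_upwards [hev.filter_mono nhdsWithin_le_nhds, self_mem_nhdsWithin]
        with p hp hpS
      have : betaFun α g p.1 p.2 ≤ x :=
        beta_le_of_phi_ge hαc hαpos hgpos (by exact hpS.2) hx0 (by linarith [hp])
      exact lt_of_le_of_lt this hxb

/-- Comparison principle with an additive perturbation inside the nonlinearity. -/
theorem stmt_3 (α g : ℝ → ℝ)
    (hαc : ContinuousOn α (Ici 0)) (hαnn : ∀ s ∈ Ici (0:ℝ), 0 ≤ α s)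
    (hαpos : ∀ s > (0:ℝ), 0 < α s)
    (hgc : ContinuousOn g (Ici 0)) (hgpos : ∀ s ∈ Ici (0:ℝ), 0 < g s)
    (hG : Tendsto (fun s => ∫ τ in (0:ℝ)..s, g τ) atTop atTop) :
    ∃ β : ℝ → ℝ → ℝ, ClassKL β ∧
      ∀ T > (0:ℝ), ∀ y₀ ≥ (0:ℝ), ∀ v : ℝ → ℝ,
        ContinuousOn v (Icc 0 T) → (∀ t ∈ Icc (0:ℝ) T, 0 ≤ v t) →
        ∀ y y' : ℝ → ℝ,
        y 0 = y₀ →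
        (∀ t ∈ Icc (0:ℝ) T, 0 ≤ y t) →
        IsACDeriv T y y' →
        (∀ᵐ t ∂(volume.restrict (Icc (0:ℝ) T)), y' t ≤ -g t * α (max (y t + v t) 0)) →
        ∀ t ∈ Icc (0:ℝ) T, y t ≤ max (β y₀ t) (sSup (v '' Icc 0 t)) := by
  refine ⟨betaFun α g, ⟨?_, ?_, ?_⟩, ?_⟩
  · exact beta_continuousOn hαc hαnn hαpos hgc hgpos
  · -- class K in the first variable
    intro t ht
    refine ⟨?_, beta_strictMonoOn hαc hαnn hαpos hgpos ht, beta_zero hαc hαnn t,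
      fun s hs => beta_nonneg hαc hαnn hs⟩
    have hmap : ∀ s : ℝ, s ∈ Ici (0:ℝ) → (s, t) ∈ (Ici 0 ×ˢ Ici (0:ℝ)) :=
      fun s hs => ⟨hs, ht⟩
    exact (beta_continuousOn hαc hαnn hαpos hgc hgpos).comp
      ((continuous_id.prodMk continuous_const).continuousOn) hmap
  · -- KL decay in t
    intro r hr
    exact ⟨beta_strictAntiOn hαc hαnn hαpos hgc hgpos hr,
      beta_tendsto hαc hαnn hαpos hgc hgpos hG hr⟩
  · -- the comparison bound
    intro T hT y₀ hy₀ v hvc hvnn y y' hy0 hynn hac hode t htmem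
    obtain ⟨hy'int, hyFTC⟩ := hac
    obtain ⟨ht0, htT⟩ := htmem
    -- interval integrability of y' on subintervals of [0, T]
    have hsub : ∀ a b : ℝ, 0 ≤ a → a ≤ b → b ≤ T → IntervalIntegrable y' volume a b := by
      intro a b ha hab hb
      apply IntegrableOn.intervalIntegrable
      apply hy'int.mono_set
      rw [uIcc_of_le hab]
      exact Icc_subset_Icc ha hb
    -- y' ≤ 0 a.e.
    have hode0 : ∀ᵐ u ∂(volume.restrict (Icc (0:ℝ) T)), y' u ≤ 0 := by
      filter_upwards [hode, ae_restrict_mem measurableSet_Icc] with u hu humem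
      have hgu : 0 < g u := hgpos u humem.1
      have hαu : 0 ≤ α (max (y u + v u) 0) := hαnn _ (mem_Ici.2 (le_max_right _ _))
      nlinarith
    -- y is nonincreasing on [0, T]
    have hmono : ∀ s₁ s₂ : ℝ, 0 ≤ s₁ → s₁ ≤ s₂ → s₂ ≤ T → y s₂ ≤ y s₁ := by
      intro s₁ s₂ h1 h12 h2
      have hFTC₁ := hyFTC s₁ ⟨h1, h12.trans h2⟩
      have hFTC₂ := hyFTC s₂ ⟨h1.trans h12, h2⟩
      have hadd : (∫ s in (0:ℝ)..s₁, y' s) + ∫ s in s₁..s₂, y' s = ∫ s in (0:ℝ)..s₂, y' s :=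
        intervalIntegral.integral_add_adjacent_intervals
          (hsub 0 s₁ le_rfl h1 (h12.trans h2)) (hsub s₁ s₂ h1 h12 h2)
      have hle : (∫ s in s₁..s₂, y' s) ≤ ∫ s in s₁..s₂, (0:ℝ) := by
        apply intervalIntegral.integral_mono_ae_restrict h12 (hsub s₁ s₂ h1 h12 h2)
          intervalIntegrable_const
        exact ae_restrict_of_ae_restrict_of_subset (Icc_subset_Icc h1 h2) hode0
      rw [intervalIntegral.integral_zero] at hle
      linarith
    set Sv := sSup (v '' Icc 0 t) with hSvdef
    by_cases hcase : y t ≤ Sv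
    · exact le_max_of_le_right hcase
    push_neg at hcase
    have hbdd : BddAbove (v '' Icc 0 t) :=
      (isCompact_Icc.image_of_continuousOn (hvc.mono (Icc_subset_Icc le_rfl htT))).bddAbove
    have hvle : ∀ s ∈ Icc (0:ℝ) t, v s ≤ Sv := fun s hs =>
      le_csSup hbdd (mem_image_of_mem v hs)
    have hSvnn : 0 ≤ Sv := by
      have h0mem : (0:ℝ) ∈ Icc (0:ℝ) t := ⟨le_rfl, ht0⟩
      exact le_trans (hvnn 0 ⟨le_rfl, hT.le⟩) (hvle 0 h0mem)
    have hyt_pos : 0 < y t := lt_of_le_of_lt hSvnn hcase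
    have hyty₀ : y t ≤ y₀ := hy0 ▸ hmono 0 t le_rfl ht0 htT
    set K := mfun α (y t) * cfun α y₀ with hKdef
    -- pointwise lower bound on α along the trajectory
    have hKa : ∀ s ∈ Icc (0:ℝ) t, K ≤ α (max (y s + v s) 0) := by
      intro s hs
      have hsT : s ∈ Icc (0:ℝ) T := ⟨hs.1, hs.2.trans htT⟩
      have hys : 0 ≤ y s := hynn s hsT
      have hvs : 0 ≤ v s := hvnn s hsT
      have hmax : max (y s + v s) 0 = y s + v s := max_eq_left (by linarith)
      rw [hmax]
      apply envelope hαc hαnn hαpos hyt_pos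
      · have := hmono s t hs.1 hs.2 htT
        linarith
      · have h1 : y s ≤ y₀ := hy0 ▸ hmono 0 s le_rfl hs.1 hsT.2
        have h2 : v s ≤ Sv := hvle s hs
        linarith
    -- integral comparison
    have hKnn : 0 ≤ K := mul_nonneg (mfun_nonneg hαc hαnn _) (cfun_pos hαc hαpos _).le
    have hgK : IntervalIntegrable (fun s => -(K * g (max s 0))) volume 0 t :=
      ((continuous_const.mul (gball_cont hgc)).neg).intervalIntegrable 0 t
    have haet : ∀ᵐ s ∂(volume.restrict (Icc (0:ℝ) t)),
        y' s ≤ -(K * g (max s 0)) := by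
      filter_upwards [ae_restrict_of_ae_restrict_of_subset (Icc_subset_Icc le_rfl htT) hode,
        ae_restrict_mem measurableSet_Icc] with s hsle hsmem
      have hgs : 0 ≤ g s := (hgpos s hsmem.1).le
      have h1 : K ≤ α (max (y s + v s) 0) := hKa s hsmem
      have h2 : g s * K ≤ g s * α (max (y s + v s) 0) :=
        mul_le_mul_of_nonneg_left h1 hgs
      have hmaxs : max s 0 = s := max_eq_left hsmem.1
      rw [hmaxs]
      nlinarith
    have hint : (∫ s in (0:ℝ)..t, y' s) ≤ ∫ s in (0:ℝ)..t, -(K * g (max s 0)) :=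
      intervalIntegral.integral_mono_ae_restrict ht0 (hsub 0 t le_rfl ht0 htT) hgK haet
    have hrhs : (∫ s in (0:ℝ)..t, -(K * g (max s 0))) = -(K * Gfun g t) := by
      rw [intervalIntegral.integral_neg, intervalIntegral.integral_const_mul]
      rfl
    have hFTCt := hyFTC t ⟨ht0, htT⟩
    have hfinal : y t + mfun α (y t) * (cfun α y₀ * Gfun g t) ≤ y₀ := by
      have : y t ≤ y₀ - K * Gfun g t := by
        rw [← hy0]
        rw [hrhs] at hint
        linarith
      rw [hKdef] at this
      linarith [mul_assoc (mfun α (y t)) (cfun α y₀) (Gfun g t)]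
    have hytS : y t ∈ Sset α g y₀ t := ⟨hynn t ⟨ht0, htT⟩, hyty₀, hfinal⟩
    exact le_max_of_le_left (mem_le_beta hytS)
end
end

section
/- Let α : [0,∞) → [0,∞) be continuous with α(s) > 0 for all s > 0, continuously differentiable on (0,∞), and locally Lipschitz on [0,∞), and let g : [0,∞) → [0,∞) be continuous with g(s) > 0 for all s ≥ 0 and ∫₀^s g(τ)dτ → +∞ as s → +∞. Then there exists a function β of class 𝒦𝓛 (depending only on α and g) such that for every T > 0, every y₀ ≥ 0, every continuous v : [0,T] → [0,∞), and every nonnegative absolutely continuous function y on [0,T] satisfying y(0) = y₀ and y′(t) ≤ −g(t)·α(y(t)) + v(t) for almost every t ∈ [0,T], one has y(t) ≤ β(y₀, t) + 2∫₀^t v(s)ds for all t ∈ [0,T]. -/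
open Set MeasureTheory Filter
open Topology

noncomputable section

namespace Stmt4Aux

variable (α g : ℝ → ℝ)

def Gf (t : ℝ) : ℝ := ∫ s in (0:ℝ)..t, g s
def cbar (u r : ℝ) : ℝ := sInf (α '' Icc u (2 * r))
def S0 (r t : ℝ) : Set ℝ := {u : ℝ | u ∈ Icc 0 r ∧ Gf g t * cbar α u r ≤ r}
def beta0 (r t : ℝ) : ℝ := sSup (S0 α g r t)
def B1 (ρ t : ℝ) : ℝ := 2 * ∫ u in (1/2 : ℝ)..1, beta0 α g ρ (t * u)
def B2 (r t : ℝ) : ℝ := ∫ u in (1:ℝ)..2, B1 α g (r * u) t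
def Fp (ρ x : ℝ) : ℝ := ∫ s in (0:ℝ)..x, beta0 α g ρ s
def Phi (r x : ℝ) : ℝ := ∫ u in (1:ℝ)..2, Fp α g (r * u) x
def Hq (t x : ℝ) : ℝ := ∫ σ in (0:ℝ)..x, B1 α g σ t
def betaKL (r t : ℝ) : ℝ := B2 α g r t + r / (1 + max t 0)

-- basic g integrability
lemma g_ii (hgc : ContinuousOn g (Ici 0)) {a b : ℝ} (h0 : 0 ≤ a) (hab : a ≤ b) :
    IntervalIntegrable g volume a b := by
  apply ContinuousOn.intervalIntegrable
  rw [uIcc_of_le hab]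
  exact hgc.mono (fun x hx => le_trans h0 hx.1)

lemma Gf_add (hgc : ContinuousOn g (Ici 0)) {a b : ℝ} (h0 : 0 ≤ a) (hab : a ≤ b) :
    Gf g b = Gf g a + ∫ s in a..b, g s :=
  (intervalIntegral.integral_add_adjacent_intervals (g_ii g hgc le_rfl h0)
    (g_ii g hgc h0 hab)).symm

lemma Gf_mono (hgc : ContinuousOn g (Ici 0)) (hgpos : ∀ s ∈ Ici (0:ℝ), 0 < g s)
    {a b : ℝ} (h0 : 0 ≤ a) (hab : a ≤ b) : Gf g a ≤ Gf g b := by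
  rw [Gf_add g hgc h0 hab]
  have : 0 ≤ ∫ s in a..b, g s :=
    intervalIntegral.integral_nonneg hab (fun u hu => (hgpos u (le_trans h0 hu.1)).le)
  linarith

lemma Gf_zero : Gf g 0 = 0 := intervalIntegral.integral_same

lemma Gf_nonneg (hgc : ContinuousOn g (Ici 0)) (hgpos : ∀ s ∈ Ici (0:ℝ), 0 < g s)
    {t : ℝ} (ht : 0 ≤ t) : 0 ≤ Gf g t := by
  have := Gf_mono g hgc hgpos le_rfl ht
  rwa [Gf_zero] at this

lemma contOn_Ici_of_Icc {f : ℝ → ℝ} (h : ∀ b : ℝ, 0 < b → ContinuousOn f (Icc 0 b)) :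
    ContinuousOn f (Ici 0) := by
  intro x hx
  have h1 : ContinuousWithinAt f (Icc 0 (x+1)) x :=
    (h (x+1) (by simp at hx; linarith)) x ⟨hx, by linarith⟩
  have h2 : Icc (0:ℝ) (x+1) = Ici 0 ∩ Iic (x+1) := (Ici_inter_Iic).symm
  rw [h2] at h1
  exact (continuousWithinAt_inter (Iic_mem_nhds (lt_add_one x))).mp h1

lemma Gf_contOn (hgc : ContinuousOn g (Ici 0)) : ContinuousOn (Gf g) (Ici 0) := by
  apply contOn_Ici_of_Icc
  intro b hb
  have : IntegrableOn g (Icc 0 b) := (hgc.mono (fun x hx => hx.1)).integrableOn_Icc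
  have h := intervalIntegral.continuousOn_primitive_interval (a := 0) (b := b) (μ := volume)
    (by rwa [uIcc_of_le hb.le])
  rwa [uIcc_of_le hb.le] at h


-- ## cbar lemmas
lemma cbar_nonneg (hαnn : ∀ s ∈ Ici (0:ℝ), 0 ≤ α s) {u r : ℝ} (hu : 0 ≤ u) :
    0 ≤ cbar α u r := by
  apply Real.sInf_nonneg
  rintro x ⟨y, hy, rfl⟩
  exact hαnn y (le_trans hu hy.1)

lemma cbar_bddBelow (hαnn : ∀ s ∈ Ici (0:ℝ), 0 ≤ α s) {u r : ℝ} (hu : 0 ≤ u) :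
    BddBelow (α '' Icc u (2*r)) := by
  refine ⟨0, ?_⟩
  rintro x ⟨y, hy, rfl⟩
  exact hαnn y (le_trans hu hy.1)

lemma cbar_le_alpha (hαnn : ∀ s ∈ Ici (0:ℝ), 0 ≤ α s) {u r : ℝ} (hu : 0 ≤ u)
    (hur : u ≤ 2*r) : cbar α u r ≤ α (2*r) :=
  csInf_le (cbar_bddBelow α hαnn hu) ⟨2*r, ⟨hur, le_rfl⟩, rfl⟩

lemma cbar_anti_r (hαnn : ∀ s ∈ Ici (0:ℝ), 0 ≤ α s) {u r r' : ℝ} (hu : 0 ≤ u)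
    (hur : u ≤ 2*r) (hrr' : r ≤ r') : cbar α u r' ≤ cbar α u r := by
  apply csInf_le_csInf (cbar_bddBelow α hαnn hu)
  · exact (nonempty_Icc.mpr hur).image α
  · exact image_mono (f := α) (Icc_subset_Icc_right (by linarith))

lemma cbar_mono_u (hαnn : ∀ s ∈ Ici (0:ℝ), 0 ≤ α s) {u u' r : ℝ} (hu : 0 ≤ u)
    (huu' : u ≤ u') (hur : u' ≤ 2*r) : cbar α u r ≤ cbar α u' r := by
  apply csInf_le_csInf (cbar_bddBelow α hαnn hu)
  · exact (nonempty_Icc.mpr hur).image α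
  · exact image_mono (f := α) (Icc_subset_Icc_left huu')

lemma cbar_pos (hαc : ContinuousOn α (Ici 0)) (hαpos : ∀ s > (0:ℝ), 0 < α s)
    {u r : ℝ} (hu : 0 < u) (hur : u ≤ 2*r) : 0 < cbar α u r := by
  obtain ⟨x₀, hx₀m, hx₀⟩ := isCompact_Icc.exists_isMinOn (nonempty_Icc.mpr hur)
    (hαc.mono (fun x hx => le_trans hu.le hx.1))
  have hpos : 0 < α x₀ := hαpos x₀ (lt_of_lt_of_le hu hx₀m.1)
  refine lt_of_lt_of_le hpos (le_csInf ((nonempty_Icc.mpr hur).image α) ?_)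
  rintro b ⟨y, hy, rfl⟩
  exact hx₀ hy

-- ## beta0 lemmas
lemma beta0_nonneg {r t : ℝ} : 0 ≤ beta0 α g r t :=
  Real.sSup_nonneg (fun _ hu => hu.1.1)

lemma beta0_le {r t : ℝ} (hr : 0 ≤ r) : beta0 α g r t ≤ r :=
  Real.sSup_le (fun _ hu => hu.1.2) hr

lemma S0_bddAbove {r t : ℝ} : BddAbove (S0 α g r t) := ⟨r, fun _ hu => hu.1.2⟩

lemma beta0_of_neg {r t : ℝ} (hr : r < 0) : beta0 α g r t = 0 := by
  have : S0 α g r t = ∅ := by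
    ext u; simp only [S0, mem_setOf_eq, mem_Icc, mem_empty_iff_false, iff_false]
    rintro ⟨⟨h1, h2⟩, -⟩; linarith
  rw [beta0, this, Real.sSup_empty]

lemma beta0_mono_r (hαnn : ∀ s ∈ Ici (0:ℝ), 0 ≤ α s)
    (hgc : ContinuousOn g (Ici 0)) (hgpos : ∀ s ∈ Ici (0:ℝ), 0 < g s)
    {t : ℝ} (ht : 0 ≤ t) : Monotone (fun r => beta0 α g r t) := by
  intro r r' hrr'
  show beta0 α g r t ≤ beta0 α g r' t
  rcases lt_or_ge r 0 with hr | hr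
  · rw [beta0_of_neg α g hr]; exact beta0_nonneg α g
  · refine Real.sSup_le (fun u hu => ?_) (beta0_nonneg α g)
    refine le_csSup (S0_bddAbove α g) ⟨⟨hu.1.1, hu.1.2.trans hrr'⟩, ?_⟩
    calc Gf g t * cbar α u r' ≤ Gf g t * cbar α u r :=
          mul_le_mul_of_nonneg_left (cbar_anti_r α hαnn hu.1.1 (by linarith [hu.1.2]) hrr')
            (Gf_nonneg g hgc hgpos ht)
      _ ≤ r := hu.2
      _ ≤ r' := hrr'

lemma beta0_anti_t (hαnn : ∀ s ∈ Ici (0:ℝ), 0 ≤ α s)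
    (hgc : ContinuousOn g (Ici 0)) (hgpos : ∀ s ∈ Ici (0:ℝ), 0 < g s)
    {r t t' : ℝ} (ht : 0 ≤ t) (htt' : t ≤ t') :
    beta0 α g r t' ≤ beta0 α g r t := by
  refine Real.sSup_le (fun u hu => ?_) (beta0_nonneg α g)
  refine le_csSup (S0_bddAbove α g) ⟨hu.1, ?_⟩
  calc Gf g t * cbar α u r ≤ Gf g t' * cbar α u r :=
        mul_le_mul_of_nonneg_right (Gf_mono g hgc hgpos ht htt')
          (cbar_nonneg α hαnn hu.1.1)
    _ ≤ r := hu.2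

lemma beta0_eq_self (hαnn : ∀ s ∈ Ici (0:ℝ), 0 ≤ α s)
    (hgc : ContinuousOn g (Ici 0)) (hgpos : ∀ s ∈ Ici (0:ℝ), 0 < g s)
    {r t : ℝ} (hr : 0 ≤ r) (ht : 0 ≤ t) (h : Gf g t * α (2*r) ≤ r) :
    beta0 α g r t = r := by
  refine le_antisymm (beta0_le α g hr) (le_csSup (S0_bddAbove α g) ⟨⟨hr, le_rfl⟩, ?_⟩)
  calc Gf g t * cbar α r r ≤ Gf g t * α (2*r) :=
        mul_le_mul_of_nonneg_left (cbar_le_alpha α hαnn hr (by linarith))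
          (Gf_nonneg g hgc hgpos ht)
    _ ≤ r := h

lemma beta0_le_of_absorb (hαnn : ∀ s ∈ Ici (0:ℝ), 0 ≤ α s)
    (hgc : ContinuousOn g (Ici 0)) (hgpos : ∀ s ∈ Ici (0:ℝ), 0 < g s)
    {r t ε : ℝ} (hr : 0 ≤ r) (ht : 0 ≤ t) (hε : 0 < ε)
    (h : r < Gf g t * cbar α ε r) : beta0 α g r t ≤ ε := by
  refine Real.sSup_le (fun u hu => ?_) hε.le
  by_contra hlt
  push_neg at hlt
  have h1 : cbar α ε r ≤ cbar α u r :=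
    cbar_mono_u α hαnn hε.le hlt.le (by linarith [hu.1.2, hr])
  have h2 : Gf g t * cbar α ε r ≤ Gf g t * cbar α u r :=
    mul_le_mul_of_nonneg_left h1 (Gf_nonneg g hgc hgpos ht)
  linarith [hu.2]


-- ## B1 lemmas
section B1sec
variable (hαnn : ∀ s ∈ Ici (0:ℝ), 0 ≤ α s)
    (hgc : ContinuousOn g (Ici 0)) (hgpos : ∀ s ∈ Ici (0:ℝ), 0 < g s)

include hαnn hgc hgpos

lemma B1_integrand_anti {ρ t : ℝ} (ht : 0 ≤ t) {a b : ℝ} (ha : 0 ≤ a) :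
    AntitoneOn (fun u => beta0 α g ρ (t * u)) (Icc a b) := by
  intro u hu u' hu' huu'
  rcases lt_or_ge ρ 0 with hρ | hρ
  · simp only [beta0_of_neg α g hρ, le_refl]
  · exact beta0_anti_t α g hαnn hgc hgpos
      (mul_nonneg ht (le_trans ha hu.1)) (mul_le_mul_of_nonneg_left huu' ht)

lemma B1_ii {ρ t : ℝ} (ht : 0 ≤ t) {a b : ℝ} (ha : 0 ≤ a) (hab : a ≤ b) :
    IntervalIntegrable (fun u => beta0 α g ρ (t * u)) volume a b := by
  apply AntitoneOn.intervalIntegrable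
  rw [uIcc_of_le hab]
  exact B1_integrand_anti α g hαnn hgc hgpos ht ha

lemma B1_ge {ρ t : ℝ} (hρ : 0 ≤ ρ) (ht : 0 ≤ t) : beta0 α g ρ t ≤ B1 α g ρ t := by
  have h : ∫ u in (1/2:ℝ)..1, beta0 α g ρ t ≤ ∫ u in (1/2:ℝ)..1, beta0 α g ρ (t*u) := by
    apply intervalIntegral.integral_mono_on (by norm_num) intervalIntegrable_const
      (B1_ii α g hαnn hgc hgpos ht (by norm_num) (by norm_num))
    intro u hu
    exact beta0_anti_t α g hαnn hgc hgpos (mul_nonneg ht (by linarith [hu.1]))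
      (mul_le_of_le_one_right ht hu.2)
  rw [intervalIntegral.integral_const] at h
  rw [B1]
  simp only [smul_eq_mul] at h
  nlinarith [h]

lemma B1_le {ρ t : ℝ} (hρ : 0 ≤ ρ) (ht : 0 ≤ t) : B1 α g ρ t ≤ beta0 α g ρ (t/2) := by
  have h : ∫ u in (1/2:ℝ)..1, beta0 α g ρ (t*u) ≤ ∫ u in (1/2:ℝ)..1, beta0 α g ρ (t/2) := by
    apply intervalIntegral.integral_mono_on (by norm_num)
      (B1_ii α g hαnn hgc hgpos ht (by norm_num) (by norm_num)) intervalIntegrable_const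
    intro u hu
    exact beta0_anti_t α g hαnn hgc hgpos (by linarith) (by nlinarith [hu.1])
  rw [intervalIntegral.integral_const] at h
  rw [B1]
  simp only [smul_eq_mul] at h
  nlinarith [h]

lemma B1_nonneg {ρ t : ℝ} (ht : 0 ≤ t) : 0 ≤ B1 α g ρ t := by
  rw [B1]
  have : 0 ≤ ∫ u in (1/2:ℝ)..1, beta0 α g ρ (t*u) :=
    intervalIntegral.integral_nonneg (by norm_num) (fun u _ => beta0_nonneg α g)
  linarith

lemma B1_le_self {ρ t : ℝ} (hρ : 0 ≤ ρ) (ht : 0 ≤ t) : B1 α g ρ t ≤ ρ :=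
  (B1_le α g hαnn hgc hgpos hρ ht).trans (beta0_le α g hρ)

lemma B1_mono_rho {t : ℝ} (ht : 0 ≤ t) : Monotone (fun ρ => B1 α g ρ t) := by
  intro ρ ρ' hρρ'
  show B1 α g ρ t ≤ B1 α g ρ' t
  rw [B1, B1]
  have h : ∫ u in (1/2:ℝ)..1, beta0 α g ρ (t*u) ≤ ∫ u in (1/2:ℝ)..1, beta0 α g ρ' (t*u) := by
    apply intervalIntegral.integral_mono_on (by norm_num)
      (B1_ii α g hαnn hgc hgpos ht (by norm_num) (by norm_num))
      (B1_ii α g hαnn hgc hgpos ht (by norm_num) (by norm_num))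
    intro u hu
    exact beta0_mono_r α g hαnn hgc hgpos (mul_nonneg ht (by linarith [hu.1])) hρρ'
  linarith

lemma B1_anti_t {ρ t t' : ℝ} (ht : 0 ≤ t) (htt' : t ≤ t') : B1 α g ρ t' ≤ B1 α g ρ t := by
  rw [B1, B1]
  have h : ∫ u in (1/2:ℝ)..1, beta0 α g ρ (t'*u) ≤ ∫ u in (1/2:ℝ)..1, beta0 α g ρ (t*u) := by
    apply intervalIntegral.integral_mono_on (by norm_num)
      (B1_ii α g hαnn hgc hgpos (by linarith) (by norm_num) (by norm_num))
      (B1_ii α g hαnn hgc hgpos ht (by norm_num) (by norm_num))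
    intro u hu
    rcases lt_or_ge ρ 0 with hρ | hρ
    · simp only [beta0_of_neg α g hρ, le_refl]
    · exact beta0_anti_t α g hαnn hgc hgpos (mul_nonneg ht (by linarith [hu.1]))
        (mul_le_mul_of_nonneg_right htt' (by linarith [hu.1]))
  linarith


-- ## B2 lemmas
lemma B2_integrand_mono {r t : ℝ} (ht : 0 ≤ t) (hr : 0 ≤ r) :
    Monotone (fun u => B1 α g (r * u) t) := by
  intro u u' huu'
  exact B1_mono_rho α g hαnn hgc hgpos ht (mul_le_mul_of_nonneg_left huu' hr)

lemma B2_ii {r t : ℝ} (ht : 0 ≤ t) (hr : 0 ≤ r) {a b : ℝ} :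
    IntervalIntegrable (fun u => B1 α g (r * u) t) volume a b :=
  ((B2_integrand_mono α g hαnn hgc hgpos ht hr).monotoneOn _).intervalIntegrable

lemma B2_ge {r t : ℝ} (hr : 0 ≤ r) (ht : 0 ≤ t) : B1 α g r t ≤ B2 α g r t := by
  have h : ∫ u in (1:ℝ)..2, B1 α g r t ≤ ∫ u in (1:ℝ)..2, B1 α g (r*u) t := by
    apply intervalIntegral.integral_mono_on (by norm_num) intervalIntegrable_const
      (B2_ii α g hαnn hgc hgpos ht hr)
    intro u hu
    exact B1_mono_rho α g hαnn hgc hgpos ht (le_mul_of_one_le_right hr hu.1)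
  rw [intervalIntegral.integral_const] at h
  simp only [smul_eq_mul] at h
  rw [B2]; linarith

lemma B2_le {r t : ℝ} (hr : 0 ≤ r) (ht : 0 ≤ t) : B2 α g r t ≤ B1 α g (2*r) t := by
  have h : ∫ u in (1:ℝ)..2, B1 α g (r*u) t ≤ ∫ u in (1:ℝ)..2, B1 α g (2*r) t := by
    apply intervalIntegral.integral_mono_on (by norm_num)
      (B2_ii α g hαnn hgc hgpos ht hr) intervalIntegrable_const
    intro u hu
    exact B1_mono_rho α g hαnn hgc hgpos ht (by nlinarith [hu.2])
  rw [intervalIntegral.integral_const] at h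
  simp only [smul_eq_mul] at h
  rw [B2]; linarith

lemma B2_nonneg {r t : ℝ} (ht : 0 ≤ t) : 0 ≤ B2 α g r t := by
  rw [B2]
  exact intervalIntegral.integral_nonneg (by norm_num)
    (fun u _ => B1_nonneg α g hαnn hgc hgpos ht)

lemma B2_le_two_r {r t : ℝ} (hr : 0 ≤ r) (ht : 0 ≤ t) : B2 α g r t ≤ 2*r :=
  (B2_le α g hαnn hgc hgpos hr ht).trans
    (B1_le_self α g hαnn hgc hgpos (by linarith) ht)

lemma B2_mono_r {t : ℝ} (ht : 0 ≤ t) : MonotoneOn (fun r => B2 α g r t) (Ici 0) := by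
  intro r hr r' hr' hrr'
  show B2 α g r t ≤ B2 α g r' t
  rw [B2, B2]
  apply intervalIntegral.integral_mono_on (by norm_num)
    (B2_ii α g hαnn hgc hgpos ht hr) (B2_ii α g hαnn hgc hgpos ht hr')
  intro u hu
  exact B1_mono_rho α g hαnn hgc hgpos ht
    (mul_le_mul_of_nonneg_right hrr' (by linarith [hu.1]))

lemma B2_anti_t {r t t' : ℝ} (hr : 0 ≤ r) (ht : 0 ≤ t) (htt' : t ≤ t') :
    B2 α g r t' ≤ B2 α g r t := by
  rw [B2, B2]
  apply intervalIntegral.integral_mono_on (by norm_num)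
    (B2_ii α g hαnn hgc hgpos (by linarith) hr) (B2_ii α g hαnn hgc hgpos ht hr)
  intro u hu
  exact B1_anti_t α g hαnn hgc hgpos ht htt'

lemma B2_zero_r {t : ℝ} (ht : 0 ≤ t) : B2 α g 0 t = 0 :=
  le_antisymm (by simpa using B2_le_two_r α g hαnn hgc hgpos le_rfl ht)
    (B2_nonneg α g hαnn hgc hgpos ht)


-- ## Fp / Phi machinery (t-continuity)
lemma beta0_ii_s {ρ a b : ℝ} (h0 : 0 ≤ a) (hab : a ≤ b) :
    IntervalIntegrable (fun s => beta0 α g ρ s) volume a b := by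
  apply AntitoneOn.intervalIntegrable
  rw [uIcc_of_le hab]
  intro s hs s' hs' hss'
  rcases lt_or_ge ρ 0 with hρ | hρ
  · simp only [beta0_of_neg α g hρ, le_refl]
  · exact beta0_anti_t α g hαnn hgc hgpos (le_trans h0 hs.1) hss'

lemma Fp_sub {ρ a b : ℝ} (h0 : 0 ≤ a) (hab : a ≤ b) :
    Fp α g ρ b - Fp α g ρ a = ∫ s in a..b, beta0 α g ρ s := by
  have h := intervalIntegral.integral_add_adjacent_intervals
    (beta0_ii_s α g hαnn hgc hgpos (ρ := ρ) le_rfl h0)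
    (beta0_ii_s α g hαnn hgc hgpos (ρ := ρ) h0 hab)
  rw [Fp, Fp]; linarith

lemma Fp_lip {ρ a b : ℝ} (hρ : 0 ≤ ρ) (h0a : 0 ≤ a) (h0b : 0 ≤ b) :
    |Fp α g ρ b - Fp α g ρ a| ≤ ρ * |b - a| := by
  have key : ∀ x y : ℝ, 0 ≤ x → x ≤ y → |Fp α g ρ y - Fp α g ρ x| ≤ ρ * |y - x| := by
    intro x y hx hxy
    rw [Fp_sub α g hαnn hgc hgpos hx hxy, ← Real.norm_eq_abs]
    apply intervalIntegral.norm_integral_le_of_norm_le_const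
    intro s hs
    rw [uIoc_of_le hxy] at hs
    rw [Real.norm_eq_abs, abs_of_nonneg (beta0_nonneg α g)]
    exact beta0_le α g hρ
  rcases le_total a b with h | h
  · exact key a b h0a h
  · have := key b a h0b h
    rw [abs_sub_comm, abs_sub_comm b a]
    exact this

lemma Fp_mono_rho {x : ℝ} (hx : 0 ≤ x) : Monotone (fun ρ => Fp α g ρ x) := by
  intro ρ ρ' hρρ'
  show Fp α g ρ x ≤ Fp α g ρ' x
  apply intervalIntegral.integral_mono_on hx (beta0_ii_s α g hαnn hgc hgpos le_rfl hx)
    (beta0_ii_s α g hαnn hgc hgpos le_rfl hx)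
  intro s hs
  exact beta0_mono_r α g hαnn hgc hgpos hs.1 hρρ'

lemma Phi_ii {r x a b : ℝ} (hr : 0 ≤ r) (hx : 0 ≤ x) :
    IntervalIntegrable (fun u => Fp α g (r*u) x) volume a b := by
  apply MonotoneOn.intervalIntegrable
  intro u _ u' _ huu'
  exact Fp_mono_rho α g hαnn hgc hgpos hx (mul_le_mul_of_nonneg_left huu' hr)

lemma Phi_lip {r x y : ℝ} (hr : 0 ≤ r) (hx : 0 ≤ x) (hy : 0 ≤ y) :
    |Phi α g r y - Phi α g r x| ≤ (2*r) * |y - x| := by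
  rw [Phi, Phi, ← intervalIntegral.integral_sub (Phi_ii α g hαnn hgc hgpos hr hy)
    (Phi_ii α g hαnn hgc hgpos hr hx), ← Real.norm_eq_abs]
  have h := intervalIntegral.norm_integral_le_of_norm_le_const
    (a := 1) (b := 2) (C := (2*r) * |y - x|)
    (f := fun u => Fp α g (r*u) y - Fp α g (r*u) x) ?_
  · calc ‖∫ u in (1:ℝ)..2, (Fp α g (r*u) y - Fp α g (r*u) x)‖
        ≤ (2*r) * |y - x| * |2 - 1| := h
      _ = (2*r) * |y - x| := by norm_num
  · intro u hu
    rw [uIoc_of_le (by norm_num : (1:ℝ) ≤ 2)] at hu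
    rw [Real.norm_eq_abs]
    calc |Fp α g (r*u) y - Fp α g (r*u) x| ≤ (r*u) * |y - x| :=
          Fp_lip α g hαnn hgc hgpos (mul_nonneg hr (by linarith [hu.1])) hx hy
      _ ≤ (2*r) * |y - x| := by
          apply mul_le_mul_of_nonneg_right _ (abs_nonneg _)
          nlinarith [hu.2, hu.1]

lemma Phi_contOn {r : ℝ} (hr : 0 ≤ r) : ContinuousOn (Phi α g r) (Ici 0) := by
  apply LipschitzOnWith.continuousOn (K := (2*r).toNNReal)
  rw [lipschitzOnWith_iff_dist_le_mul]
  intro x hx y hy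
  rw [Real.dist_eq, Real.dist_eq, Real.coe_toNNReal _ (by linarith)]
  exact Phi_lip α g hαnn hgc hgpos hr hy hx

lemma B1_via_Fp {ρ t : ℝ} (ht : 0 < t) :
    B1 α g ρ t = 2 * (t⁻¹ * (Fp α g ρ t - Fp α g ρ (t/2))) := by
  have h := intervalIntegral.integral_comp_mul_left (a := 1/2) (b := 1) (beta0 α g ρ) ht.ne'
  rw [B1, h, smul_eq_mul, mul_one, show t * (1/2) = t/2 by ring,
    ← Fp_sub α g hαnn hgc hgpos (by linarith : (0:ℝ) ≤ t/2) (by linarith : t/2 ≤ t)]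

lemma B2_via_Phi {r t : ℝ} (hr : 0 ≤ r) (ht : 0 < t) :
    B2 α g r t = 2 * t⁻¹ * (Phi α g r t - Phi α g r (t/2)) := by
  rw [B2]
  have hcong : ∀ u : ℝ, B1 α g (r*u) t = 2 * t⁻¹ * (Fp α g (r*u) t - Fp α g (r*u) (t/2)) := by
    intro u
    rw [B1_via_Fp α g hαnn hgc hgpos ht]; ring
  rw [intervalIntegral.integral_congr (g := fun u => 2 * t⁻¹ * (Fp α g (r*u) t - Fp α g (r*u) (t/2)))
    (fun u _ => hcong u)]
  rw [intervalIntegral.integral_const_mul]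
  rw [intervalIntegral.integral_sub (Phi_ii α g hαnn hgc hgpos hr ht.le)
    (Phi_ii α g hαnn hgc hgpos hr (by linarith))]
  rfl

-- ## Hq machinery (r-continuity)
lemma Hq_ii {t a b : ℝ} (ht : 0 ≤ t) : IntervalIntegrable (fun σ => B1 α g σ t) volume a b :=
  ((B1_mono_rho α g hαnn hgc hgpos ht).monotoneOn _).intervalIntegrable

lemma Hq_sub {t a b : ℝ} (ht : 0 ≤ t) :
    Hq α g t b - Hq α g t a = ∫ σ in a..b, B1 α g σ t := by
  have h := intervalIntegral.integral_add_adjacent_intervals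
    (Hq_ii α g hαnn hgc hgpos ht (a := 0) (b := a)) (Hq_ii α g hαnn hgc hgpos ht (a := a) (b := b))
  rw [Hq, Hq]; linarith

lemma Hq_contOn {t : ℝ} (ht : 0 ≤ t) : ContinuousOn (Hq α g t) (Ici 0) := by
  apply contOn_Ici_of_Icc
  intro b hb
  have h := intervalIntegral.continuousOn_primitive_interval'
    (Hq_ii α g hαnn hgc hgpos ht (a := 0) (b := b)) (left_mem_uIcc)
  rwa [uIcc_of_le hb.le] at h

lemma B2_via_Hq {r t : ℝ} (hr : 0 < r) (ht : 0 ≤ t) :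
    B2 α g r t = r⁻¹ * (Hq α g t (2*r) - Hq α g t r) := by
  have h := intervalIntegral.integral_comp_mul_left (a := 1) (b := 2) (fun σ => B1 α g σ t) hr.ne'
  rw [B2, h, smul_eq_mul, mul_one, show r * 2 = 2*r by ring,
    ← Hq_sub α g hαnn hgc hgpos ht]


-- ## near-zero and continuity of B2
variable (hαc : ContinuousOn α (Ici 0)) (hαpos : ∀ s > (0:ℝ), 0 < α s)

include hαc hαpos in
lemma B2_near_zero {r : ℝ} (hr : 0 < r) :
    ∃ δ > 0, ∀ t, 0 ≤ t → t ≤ δ → B2 α g r t = 3/2 * r := by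
  obtain ⟨x₀, hx₀mem, hx₀max⟩ := isCompact_Icc.exists_isMaxOn
    (nonempty_Icc.mpr (by linarith : 2*r ≤ 4*r))
    (hαc.mono (fun x hx => le_trans (by linarith) hx.1))
  have hM : 0 < α x₀ := hαpos x₀ (by linarith [hx₀mem.1])
  have hGt : Tendsto (Gf g) (𝓝[Ici 0] 0) (𝓝 0) := by
    have h := (Gf_contOn g hgc) 0 self_mem_Ici
    rwa [ContinuousWithinAt, Gf_zero] at h
  have hev : {t : ℝ | Gf g t < r / α x₀} ∈ 𝓝[Ici 0] (0:ℝ) :=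
    hGt (Iio_mem_nhds (by positivity))
  obtain ⟨δ, hδ, hsub⟩ := Metric.mem_nhdsWithin_iff.mp hev
  refine ⟨δ/2, by linarith, ?_⟩
  intro t ht0 htδ
  have hGlt : ∀ s, 0 ≤ s → s ≤ t → Gf g s < r / α x₀ := by
    intro s hs hst
    exact hsub ⟨by rw [Metric.mem_ball, Real.dist_eq, sub_zero, abs_of_nonneg hs]; linarith, hs⟩
  have hβ : ∀ ρ, r ≤ ρ → ρ ≤ 2*r → ∀ s, 0 ≤ s → s ≤ t → beta0 α g ρ s = ρ := by
    intro ρ hρ1 hρ2 s hs hst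
    apply beta0_eq_self α g hαnn hgc hgpos (by linarith) hs
    have h1 : α (2*ρ) ≤ α x₀ := hx₀max ⟨by linarith, by linarith⟩
    have h2 : Gf g s < r / α x₀ := hGlt s hs hst
    calc Gf g s * α (2*ρ) ≤ (r / α x₀) * α x₀ := by
          apply mul_le_mul h2.le h1 (hαnn _ (mem_Ici.mpr (by linarith))) (by positivity)
      _ = r := by field_simp
      _ ≤ ρ := hρ1
  have hB1 : ∀ u, 1 ≤ u → u ≤ 2 → B1 α g (r*u) t = r*u := by
    intro u h1 h2
    rw [B1, intervalIntegral.integral_congr (g := fun _ => r*u) ?_]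
    · rw [intervalIntegral.integral_const, smul_eq_mul]; ring
    · intro w hw
      rw [uIcc_of_le (by norm_num : (1:ℝ)/2 ≤ 1)] at hw
      exact hβ (r*u) (le_mul_of_one_le_right hr.le h1) (by nlinarith) (t*w)
        (mul_nonneg ht0 (by linarith [hw.1])) (mul_le_of_le_one_right ht0 hw.2)
  rw [B2, intervalIntegral.integral_congr (g := fun u => r*u) ?_]
  · rw [intervalIntegral.integral_const_mul, integral_id]
    norm_num
    ring
  · intro u hu
    rw [uIcc_of_le (by norm_num : (1:ℝ) ≤ 2)] at hu
    exact hB1 u hu.1 hu.2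

include hαc hαpos in
lemma B2_contOn_t {r : ℝ} (hr : 0 ≤ r) : ContinuousOn (fun t => B2 α g r t) (Ici 0) := by
  rcases hr.eq_or_lt with h0r | h0r
  · exact continuousOn_const.congr (fun t ht => by rw [← h0r, B2_zero_r α g hαnn hgc hgpos ht])
  · intro t₀ ht₀
    rcases (mem_Ici.mp ht₀).eq_or_lt with h0 | h0
    · obtain ⟨δ, hδ, hconst⟩ := B2_near_zero α g hαnn hgc hgpos hαc hαpos h0r
      apply ContinuousWithinAt.congr_of_eventuallyEq
        (continuousWithinAt_const (b := 3/2 * r))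
      · have hmem : Ici (0:ℝ) ∩ Iic δ ∈ 𝓝[Ici 0] t₀ :=
          inter_mem_nhdsWithin _ (Iic_mem_nhds (show t₀ < δ by rw [← h0]; exact hδ))
        filter_upwards [hmem] with t ht
        exact hconst t ht.1 ht.2
      · rw [← h0]; exact hconst 0 le_rfl hδ.le
    · have hPc := Phi_contOn α g hαnn hgc hgpos hr
      have hPhiT : ContinuousAt (Phi α g r) t₀ := hPc.continuousAt (Ici_mem_nhds h0)
      have hPhiH : ContinuousAt (Phi α g r) (t₀/2) := hPc.continuousAt (Ici_mem_nhds (by linarith))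
      have hca : ContinuousAt (fun t => 2 * t⁻¹ * (Phi α g r t - Phi α g r (t/2))) t₀ := by
        apply ContinuousAt.mul
        · exact continuousAt_const.mul (continuousAt_inv₀ h0.ne')
        · have hhalf : ContinuousAt (fun t : ℝ => Phi α g r (t/2)) t₀ :=
            ContinuousAt.comp (g := Phi α g r) (f := fun t : ℝ => t/2) (x := t₀) hPhiH
              ((continuous_id.div_const 2).continuousAt)
          exact hPhiT.sub hhalf
      apply ContinuousWithinAt.congr_of_eventuallyEq hca.continuousWithinAt
      · have hmem : Ioi (0:ℝ) ∈ 𝓝[Ici 0] t₀ := mem_nhdsWithin_of_mem_nhds (Ioi_mem_nhds h0)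
        filter_upwards [hmem] with t ht
        exact B2_via_Phi α g hαnn hgc hgpos hr ht
      · exact B2_via_Phi α g hαnn hgc hgpos hr h0

lemma B2_contOn_r {t : ℝ} (ht : 0 ≤ t) : ContinuousOn (fun r => B2 α g r t) (Ici 0) := by
  intro r₀ hr₀
  rcases (mem_Ici.mp hr₀).eq_or_lt with h0 | h0
  · rw [ContinuousWithinAt, ← h0, B2_zero_r α g hαnn hgc hgpos ht]
    apply squeeze_zero' (f := fun r => B2 α g r t) (t₀ := 𝓝[Ici 0] (0:ℝ)) (g := fun r => 2*r)
    · filter_upwards [self_mem_nhdsWithin] with r _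
      exact B2_nonneg α g hαnn hgc hgpos ht
    · filter_upwards [self_mem_nhdsWithin] with r hrm
      exact B2_le_two_r α g hαnn hgc hgpos hrm ht
    · have : Tendsto (fun r : ℝ => 2*r) (𝓝 (0:ℝ)) (𝓝 (2*0)) :=
        (continuous_const.mul continuous_id).tendsto 0
      simpa using this.mono_left nhdsWithin_le_nhds
  · have hHc := Hq_contOn α g hαnn hgc hgpos ht
    have hH2 : ContinuousAt (Hq α g t) (2*r₀) := hHc.continuousAt (Ici_mem_nhds (by linarith))
    have hH1 : ContinuousAt (Hq α g t) r₀ := hHc.continuousAt (Ici_mem_nhds h0)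
    have hca : ContinuousAt (fun r => r⁻¹ * (Hq α g t (2*r) - Hq α g t r)) r₀ := by
      apply ContinuousAt.mul (continuousAt_inv₀ h0.ne')
      have hdb : ContinuousAt (fun r : ℝ => Hq α g t (2*r)) r₀ :=
        ContinuousAt.comp (g := Hq α g t) (f := fun r : ℝ => 2*r) (x := r₀) hH2
          ((continuous_const.mul continuous_id).continuousAt)
      exact hdb.sub hH1
    apply ContinuousWithinAt.congr_of_eventuallyEq hca.continuousWithinAt
    · have hmem : Ioi (0:ℝ) ∈ 𝓝[Ici 0] r₀ := mem_nhdsWithin_of_mem_nhds (Ioi_mem_nhds h0)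
      filter_upwards [hmem] with r hrpos
      exact B2_via_Hq α g hαnn hgc hgpos hrpos ht
    · exact B2_via_Hq α g hαnn hgc hgpos h0 ht


end B1sec

-- ## joint continuity from separate continuity + monotonicity
lemma jointContinuousOn {f : ℝ → ℝ → ℝ}
    (hmono : ∀ t ∈ Ici (0:ℝ), MonotoneOn (fun r => f r t) (Ici 0))
    (hrc : ∀ t ∈ Ici (0:ℝ), ContinuousOn (fun r => f r t) (Ici 0))
    (htc : ∀ r ∈ Ici (0:ℝ), ContinuousOn (fun t => f r t) (Ici 0)) :
    ContinuousOn (fun p : ℝ × ℝ => f p.1 p.2) (Ici 0 ×ˢ Ici 0) := by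
  rintro ⟨r₀, t₀⟩ ⟨hr₀, ht₀⟩
  rw [Metric.continuousWithinAt_iff]
  intro ε hε
  have h1 := (hrc t₀ ht₀) r₀ hr₀
  rw [Metric.continuousWithinAt_iff] at h1
  obtain ⟨δ₁, hδ₁, H1⟩ := h1 (ε/2) (by linarith)
  set rp := r₀ + δ₁/2 with hrp
  set rm := max (r₀ - δ₁/2) 0 with hrm
  have hr₀' : (0:ℝ) ≤ r₀ := hr₀
  have hrpm : rp ∈ Ici (0:ℝ) := mem_Ici.mpr (by rw [hrp]; linarith)
  have hrmm : rm ∈ Ici (0:ℝ) := mem_Ici.mpr (le_max_right _ _)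
  have hrpd : dist rp r₀ < δ₁ := by
    rw [Real.dist_eq, hrp, add_sub_cancel_left, abs_of_nonneg (by linarith)]; linarith
  have hrmle : rm ≤ r₀ := max_le (by linarith) hr₀'
  have hrmge : r₀ - δ₁/2 ≤ rm := le_max_left _ _
  have hrmd : dist rm r₀ < δ₁ := by
    rw [Real.dist_eq, abs_lt]; constructor <;> linarith
  have h2 := (htc rp hrpm) t₀ ht₀
  rw [Metric.continuousWithinAt_iff] at h2
  obtain ⟨δ₂, hδ₂, H2⟩ := h2 (ε/2) (by linarith)
  have h3 := (htc rm hrmm) t₀ ht₀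
  rw [Metric.continuousWithinAt_iff] at h3
  obtain ⟨δ₃, hδ₃, H3⟩ := h3 (ε/2) (by linarith)
  refine ⟨min (δ₁/2) (min δ₂ δ₃), by positivity, ?_⟩
  rintro ⟨r, t⟩ ⟨hr, ht⟩ hdist
  rw [Prod.dist_eq] at hdist
  simp only at hdist hr ht
  have hdr : dist r r₀ < δ₁/2 :=
    lt_of_le_of_lt (le_max_left _ _) (hdist.trans_le (min_le_left _ _))
  have hdt2 : dist t t₀ < δ₂ :=
    lt_of_le_of_lt (le_max_right _ _) (hdist.trans_le ((min_le_right _ _).trans (min_le_left _ _)))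
  have hdt3 : dist t t₀ < δ₃ :=
    lt_of_le_of_lt (le_max_right _ _) (hdist.trans_le ((min_le_right _ _).trans (min_le_right _ _)))
  rw [Real.dist_eq, abs_lt] at hdr
  have hrle : r ≤ rp := by rw [hrp]; linarith [hdr.2]
  have hrge : rm ≤ r := max_le (by linarith [hdr.1]) (mem_Ici.mp hr)
  have u1 : f r t ≤ f rp t := (hmono t ht) hr hrpm hrle
  have l1 : f rm t ≤ f r t := (hmono t ht) hrmm hr hrge
  have u2 := H2 ht hdt2
  have l2 := H3 ht hdt3
  have u3 := H1 hrpm hrpd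
  have l3 := H1 hrmm hrmd
  rw [Real.dist_eq, abs_lt] at u2 l2 u3 l3 ⊢
  constructor <;> [nlinarith [u1, l1, u2.1, u2.2, l2.1, l2.2, u3.1, u3.2, l3.1, l3.2];
    nlinarith [u1, l1, u2.1, u2.2, l2.1, l2.2, u3.1, u3.2, l3.1, l3.2]]


-- ## betaKL lemmas
section Final
variable (hαc : ContinuousOn α (Ici 0)) (hαnn : ∀ s ∈ Ici (0:ℝ), 0 ≤ α s)
    (hαpos : ∀ s > (0:ℝ), 0 < α s)
    (hgc : ContinuousOn g (Ici 0)) (hgpos : ∀ s ∈ Ici (0:ℝ), 0 < g s)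

lemma one_add_max_pos (t : ℝ) : 0 < 1 + max t 0 := by
  have := le_max_right t 0; linarith

include hαnn hgc hgpos in
lemma betaKL_nonneg {r t : ℝ} (hr : 0 ≤ r) (ht : 0 ≤ t) : 0 ≤ betaKL α g r t :=
  add_nonneg (B2_nonneg α g hαnn hgc hgpos ht)
    (div_nonneg hr (one_add_max_pos t).le)

include hαnn hgc hgpos in
lemma beta0_le_betaKL {r t : ℝ} (hr : 0 ≤ r) (ht : 0 ≤ t) :
    beta0 α g r t ≤ betaKL α g r t := by
  have h1 := B1_ge α g hαnn hgc hgpos hr ht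
  have h2 := B2_ge α g hαnn hgc hgpos hr ht
  have h3 : 0 ≤ r / (1 + max t 0) := div_nonneg hr (one_add_max_pos t).le
  rw [betaKL]; linarith

include hαnn hgc hgpos in
lemma beta0_tendsto {r : ℝ} (hαc : ContinuousOn α (Ici 0)) (hαpos : ∀ s > (0:ℝ), 0 < α s)
    (hG : Tendsto (Gf g) atTop atTop) (hr : 0 < r) :
    Tendsto (fun t => beta0 α g (2*r) (t/2)) atTop (𝓝 0) := by
  rw [Metric.tendsto_atTop]
  intro ε hε
  set ε' := min (ε/2) (2*r) with hε'def
  have hε' : 0 < ε' := lt_min (by linarith) (by linarith)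
  have hε'le : ε' ≤ 2*r := min_le_right _ _
  have hc : 0 < cbar α ε' (2*r) := cbar_pos α hαc hαpos hε' (by linarith)
  obtain ⟨N, hN⟩ := eventually_atTop.mp (hG.eventually_ge_atTop ((2*r)/(cbar α ε' (2*r)) + 1))
  refine ⟨2 * max N 0 + 1, fun t ht => ?_⟩
  have ht2N : max N 0 ≤ t/2 := by linarith [le_max_left N 0, le_max_right N 0]
  have ht2 : (0:ℝ) ≤ t/2 := le_trans (le_max_right N 0) ht2N
  have hGe : (2*r)/(cbar α ε' (2*r)) + 1 ≤ Gf g (t/2) := hN (t/2) ((le_max_left N 0).trans ht2N)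
  have habs : beta0 α g (2*r) (t/2) ≤ ε' := by
    apply beta0_le_of_absorb α g hαnn hgc hgpos (by linarith) ht2 hε'
    have : (2*r)/(cbar α ε' (2*r)) < Gf g (t/2) := by linarith
    calc 2*r = (2*r)/(cbar α ε' (2*r)) * cbar α ε' (2*r) := by field_simp
      _ < Gf g (t/2) * cbar α ε' (2*r) := by
          apply mul_lt_mul_of_pos_right this hc
  rw [Real.dist_eq, sub_zero, abs_of_nonneg (beta0_nonneg α g)]
  calc beta0 α g (2*r) (t/2) ≤ ε' := habs
    _ ≤ ε/2 := min_le_left _ _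
    _ < ε := by linarith

include hαnn hgc hgpos in
lemma betaKL_tendsto {r : ℝ} (hαc : ContinuousOn α (Ici 0)) (hαpos : ∀ s > (0:ℝ), 0 < α s)
    (hG : Tendsto (Gf g) atTop atTop) (hr : 0 < r) :
    Tendsto (fun t => betaKL α g r t) atTop (𝓝 0) := by
  have hlin0 : Tendsto (fun t : ℝ => r/(1+t)) atTop (𝓝 0) :=
    Filter.Tendsto.div_atTop tendsto_const_nhds
      (tendsto_atTop_add_const_left _ 1 tendsto_id)
  have hup : Tendsto (fun t => beta0 α g (2*r) (t/2) + r/(1+t)) atTop (𝓝 0) := by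
    have := (beta0_tendsto α g hαnn hgc hgpos hαc hαpos hG hr).add hlin0
    simpa using this
  apply tendsto_of_tendsto_of_tendsto_of_le_of_le' tendsto_const_nhds hup
  · filter_upwards [eventually_ge_atTop (0:ℝ)] with t ht
    exact betaKL_nonneg α g hαnn hgc hgpos hr.le ht
  · filter_upwards [eventually_ge_atTop (0:ℝ)] with t ht
    have h1 : B2 α g r t ≤ B1 α g (2*r) t := B2_le α g hαnn hgc hgpos hr.le ht
    have h2 : B1 α g (2*r) t ≤ beta0 α g (2*r) (t/2) :=
      B1_le α g hαnn hgc hgpos (by linarith) ht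
    have h3 : max t 0 = t := max_eq_left ht
    rw [betaKL, h3]
    linarith

end Final

end Stmt4Aux

open Stmt4Aux in
/-- Comparison principle with an additive disturbance: `y' ≤ -g(t) α(y) + v(t)` a.e.
yields `y(t) ≤ β(y₀,t) + 2∫₀ᵗ v`. -/
theorem stmt_4 (α g : ℝ → ℝ)
    (hαc : ContinuousOn α (Ici 0)) (hαnn : ∀ s ∈ Ici (0:ℝ), 0 ≤ α s)
    (hαpos : ∀ s > (0:ℝ), 0 < α s)
    (hαC1 : ∃ α' : ℝ → ℝ, ContinuousOn α' (Ioi 0) ∧ ∀ s ∈ Ioi (0:ℝ), HasDerivAt α (α' s) s)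
    (hαLip : LocallyLipschitzOn (Ici 0) α)
    (hgc : ContinuousOn g (Ici 0)) (hgpos : ∀ s ∈ Ici (0:ℝ), 0 < g s)
    (hG : Tendsto (fun s => ∫ τ in (0:ℝ)..s, g τ) atTop atTop) :
    ∃ β : ℝ → ℝ → ℝ, ClassKL β ∧
      ∀ T > (0:ℝ), ∀ y₀ ≥ (0:ℝ), ∀ v : ℝ → ℝ,
        ContinuousOn v (Icc 0 T) → (∀ t ∈ Icc (0:ℝ) T, 0 ≤ v t) →
        ∀ y y' : ℝ → ℝ,
        y 0 = y₀ →
        (∀ t ∈ Icc (0:ℝ) T, 0 ≤ y t) →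
        IsACDeriv T y y' →
        (∀ᵐ t ∂(volume.restrict (Icc (0:ℝ) T)), y' t ≤ -g t * α (y t) + v t) →
        ∀ t ∈ Icc (0:ℝ) T, y t ≤ β y₀ t + 2 * ∫ s in (0:ℝ)..t, v s := by
  clear hαC1 hαLip
  refine ⟨betaKL α g, ⟨?_, ?_, ?_⟩, ?_⟩
  · -- joint continuity
    have hjoint := jointContinuousOn (f := fun r t => B2 α g r t)
      (fun t ht => B2_mono_r α g hαnn hgc hgpos ht)
      (fun t ht => B2_contOn_r α g hαnn hgc hgpos ht)
      (fun r hr => B2_contOn_t α g hαnn hgc hgpos hαc hαpos hr)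
    have hlin : Continuous (fun p : ℝ × ℝ => p.1 / (1 + max p.2 0)) := by
      apply Continuous.div continuous_fst
        (continuous_const.add (continuous_snd.max continuous_const))
        (fun p => (one_add_max_pos p.2).ne')
    exact hjoint.add hlin.continuousOn
  · -- ClassK slices
    intro t ht
    have ht' : (0:ℝ) ≤ t := ht
    refine ⟨?_, ?_, ?_, ?_⟩
    · exact (B2_contOn_r α g hαnn hgc hgpos ht').add
        (continuous_id.div_const _).continuousOn
    · intro a ha b hb hab
      have h1 := B2_mono_r α g hαnn hgc hgpos ht' ha hb hab.le
      have hden := one_add_max_pos t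
      have h2 : a / (1 + max t 0) < b / (1 + max t 0) := by gcongr
      simp only [betaKL]
      simp only at h1
      linarith
    · simp [betaKL, B2_zero_r α g hαnn hgc hgpos ht']
    · intro s hs
      exact betaKL_nonneg α g hαnn hgc hgpos hs ht'
  · -- StrictAntiOn and tendsto
    intro r hr
    constructor
    · intro t1 h1 t2 h2 h12
      have h1' : (0:ℝ) ≤ t1 := h1
      have h2' : (0:ℝ) ≤ t2 := h2
      have hB := B2_anti_t α g hαnn hgc hgpos hr.le h1' h12.le
      have e1 : max t1 0 = t1 := max_eq_left h1'
      have e2 : max t2 0 = t2 := max_eq_left h2'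
      have hd : r/(1+t2) < r/(1+t1) :=
        div_lt_div_of_pos_left hr (by linarith) (by linarith)
      simp only [betaKL, e1, e2]
      linarith
    · exact betaKL_tendsto α g hαnn hgc hgpos hαc hαpos hG hr
  · -- trajectory bound
    intro T hT y₀ hy₀ v hvc hvnn y y' hy0 hynn hAC hae t htmem
    obtain ⟨hy'i, hyInt⟩ := hAC
    obtain ⟨ht0, htT⟩ := htmem
    have hsub : ∀ {a b : ℝ}, 0 ≤ a → b ≤ T → Icc a b ⊆ Icc 0 T :=
      fun ha hb x hx => ⟨le_trans ha hx.1, le_trans hx.2 hb⟩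
    have hy'ii : ∀ {a b : ℝ}, 0 ≤ a → a ≤ b → b ≤ T → IntervalIntegrable y' volume a b := by
      intro a b ha hab hb
      apply MeasureTheory.IntegrableOn.intervalIntegrable
      rw [uIcc_of_le hab]
      exact hy'i.mono_set (hsub ha hb)
    have hyd : ∀ a b, 0 ≤ a → a ≤ b → b ≤ T → y b - y a = ∫ s in a..b, y' s := by
      intro a b ha hab hb
      rw [hyInt a ⟨ha, le_trans hab hb⟩, hyInt b ⟨le_trans ha hab, hb⟩]
      have h := intervalIntegral.integral_add_adjacent_intervals
        (hy'ii le_rfl ha (le_trans hab hb)) (hy'ii ha hab hb)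
      linarith
    have hyc : ContinuousOn y (Icc 0 T) := by
      have hprim : ContinuousOn (fun x => ∫ s in (0:ℝ)..x, y' s) (Icc 0 T) := by
        have h := intervalIntegral.continuousOn_primitive_interval'
          (hy'ii le_rfl hT.le le_rfl) left_mem_uIcc
        rwa [uIcc_of_le hT.le] at h
      exact (continuousOn_const.add hprim).congr (fun s hs => hyInt s hs)
    have hvii : ∀ {a b : ℝ}, 0 ≤ a → a ≤ b → b ≤ T → IntervalIntegrable v volume a b := by
      intro a b ha hab hb
      apply ContinuousOn.intervalIntegrable
      rw [uIcc_of_le hab]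
      exact hvc.mono (hsub ha hb)
    have hVd : ∀ a b, 0 ≤ a → a ≤ b → b ≤ T →
        (∫ x in (0:ℝ)..b, v x) - (∫ x in (0:ℝ)..a, v x) = ∫ x in a..b, v x := by
      intro a b ha hab hb
      have h := intervalIntegral.integral_add_adjacent_intervals
        (hvii le_rfl ha (le_trans hab hb)) (hvii ha hab hb)
      linarith
    have hVmono : ∀ a b, 0 ≤ a → a ≤ b → b ≤ T →
        (∫ x in (0:ℝ)..a, v x) ≤ ∫ x in (0:ℝ)..b, v x := by
      intro a b ha hab hb
      have h1 : 0 ≤ ∫ x in a..b, v x :=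
        intervalIntegral.integral_nonneg hab (fun u hu => hvnn u (hsub ha hb hu))
      have h2 := hVd a b ha hab hb
      linarith
    have hV0 : (∫ x in (0:ℝ)..0, v x) = 0 := intervalIntegral.integral_same
    have hVnn : ∀ b, 0 ≤ b → b ≤ T → 0 ≤ ∫ x in (0:ℝ)..b, v x := by
      intro b hb hbT
      have := hVmono 0 b le_rfl hb hbT
      linarith
    have hφc : ContinuousOn (fun s => g s * α (y s)) (Icc 0 T) :=
      (hgc.mono (fun x hx => hx.1)).mul (hαc.comp hyc (fun s hs => mem_Ici.mpr (hynn s hs)))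
    have hφnn : ∀ s ∈ Icc 0 T, 0 ≤ g s * α (y s) :=
      fun s hs => mul_nonneg (hgpos s hs.1).le (hαnn _ (mem_Ici.mpr (hynn s hs)))
    have hφii : ∀ {a b : ℝ}, 0 ≤ a → a ≤ b → b ≤ T →
        IntervalIntegrable (fun s => g s * α (y s)) volume a b := by
      intro a b ha hab hb
      apply ContinuousOn.intervalIntegrable
      rw [uIcc_of_le hab]
      exact hφc.mono (hsub ha hb)
    have hkey : ∀ a b, 0 ≤ a → a ≤ b → b ≤ T →
        y b - y a ≤ (∫ s in a..b, v s) - ∫ s in a..b, g s * α (y s) := by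
      intro a b ha hab hb
      have h2 : ∫ s in a..b, (v s - g s * α (y s)) =
          (∫ s in a..b, v s) - ∫ s in a..b, g s * α (y s) :=
        intervalIntegral.integral_sub (hvii ha hab hb) (hφii ha hab hb)
      have h1 : y b - y a ≤ ∫ s in a..b, (v s - g s * α (y s)) := by
        rw [hyd a b ha hab hb]
        apply intervalIntegral.integral_mono_ae_restrict hab (hy'ii ha hab hb)
          ((hvii ha hab hb).sub (hφii ha hab hb))
        filter_upwards [ae_restrict_of_ae_restrict_of_subset (hsub ha hb) hae] with s hs
        calc y' s ≤ -g s * α (y s) + v s := hs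
          _ = v s - g s * α (y s) := by ring
      rw [h2] at h1
      exact h1
    have hwanti : ∀ a b, 0 ≤ a → a ≤ b → b ≤ T →
        y b - (∫ x in (0:ℝ)..b, v x) ≤ y a - ∫ x in (0:ℝ)..a, v x := by
      intro a b ha hab hb
      have h1 := hkey a b ha hab hb
      have h2 := hVd a b ha hab hb
      have h3 : 0 ≤ ∫ s in a..b, g s * α (y s) :=
        intervalIntegral.integral_nonneg hab (fun u hu => hφnn u (hsub ha hb hu))
      linarith
    by_cases hcase : ∃ s, s ∈ Icc 0 t ∧ y s - (∫ x in (0:ℝ)..s, v x) ≤ ∫ x in (0:ℝ)..s, v x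
    · obtain ⟨s, hsmem, hsle⟩ := hcase
      have h1 := hwanti s t hsmem.1 hsmem.2 htT
      have h2 := hVmono s t hsmem.1 hsmem.2 htT
      have h3 : 0 ≤ betaKL α g y₀ t := betaKL_nonneg α g hαnn hgc hgpos hy₀ ht0
      linarith
    · push_neg at hcase
      have hcase' : ∀ s ∈ Icc 0 t, (∫ x in (0:ℝ)..s, v x) < y s - ∫ x in (0:ℝ)..s, v x :=
        fun s hs => hcase s hs
      have hVt : 0 ≤ ∫ x in (0:ℝ)..t, v x := hVnn t ht0 htT
      have hwt : 0 < y t - ∫ x in (0:ℝ)..t, v x := by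
        have := hcase' t ⟨ht0, le_rfl⟩; linarith
      have hw0 : ∀ s ∈ Icc 0 t, y t - (∫ x in (0:ℝ)..t, v x) ≤ y s - ∫ x in (0:ℝ)..s, v x :=
        fun s hs => hwanti s t hs.1 hs.2 htT
      have hwy₀ : ∀ s ∈ Icc 0 t, y s - (∫ x in (0:ℝ)..s, v x) ≤ y₀ := by
        intro s hs
        have := hwanti 0 s le_rfl hs.1 (hs.2.trans htT)
        rw [hV0, hy0] at this
        linarith
      have hy₀pos : 0 < y₀ := lt_of_lt_of_le hwt (hwy₀ t ⟨ht0, le_rfl⟩)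
      have hyin : ∀ s ∈ Icc 0 t,
          y s ∈ Icc (y t - ∫ x in (0:ℝ)..t, v x) (2*y₀) := by
        intro s hs
        have h1 := hw0 s hs
        have h2 : 0 ≤ ∫ x in (0:ℝ)..s, v x := hVnn s hs.1 (hs.2.trans htT)
        have h3 := hcase' s hs
        have h4 := hwy₀ s hs
        constructor <;> [linarith; linarith]
      have hcle : ∀ s ∈ Icc 0 t, cbar α (y t - ∫ x in (0:ℝ)..t, v x) y₀ ≤ α (y s) :=
        fun s hs => csInf_le (cbar_bddBelow α hαnn hwt.le) ⟨y s, hyin s hs, rfl⟩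
      have hcnn : 0 ≤ cbar α (y t - ∫ x in (0:ℝ)..t, v x) y₀ := cbar_nonneg α hαnn hwt.le
      have hint : cbar α (y t - ∫ x in (0:ℝ)..t, v x) y₀ * Gf g t ≤
          ∫ s in (0:ℝ)..t, g s * α (y s) := by
        have h1 : ∫ s in (0:ℝ)..t, cbar α (y t - ∫ x in (0:ℝ)..t, v x) y₀ * g s ≤
            ∫ s in (0:ℝ)..t, g s * α (y s) := by
          apply intervalIntegral.integral_mono_on ht0
            ((g_ii g hgc le_rfl ht0).const_mul _) (hφii le_rfl ht0 htT)
          intro s hs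
          have hc := hcle s hs
          have hg := (hgpos s hs.1).le
          nlinarith
        rwa [intervalIntegral.integral_const_mul] at h1
      have hkey0 := hkey 0 t le_rfl ht0 htT
      rw [hy0] at hkey0
      have hmem : (y t - ∫ x in (0:ℝ)..t, v x) ∈ S0 α g y₀ t := by
        refine ⟨⟨hwt.le, hwy₀ t ⟨ht0, le_rfl⟩⟩, ?_⟩
        nlinarith [hint, hkey0, hwt]
      have hwle : y t - (∫ x in (0:ℝ)..t, v x) ≤ beta0 α g y₀ t :=
        le_csSup (S0_bddAbove α g) hmem
      have hfin' := beta0_le_betaKL α g hαnn hgc hgpos hy₀ ht0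
      linarith
end
end
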